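/- arXiv:2410.04216 — 4 statements merged into one kernel-verified Lean document; each statement's English description precedes it below -/
import Mathlib

section
/- For every element a of the prime field F_p (viewed inside F_q), the sum S(a) = Σ_{i=0}^{2ℓ^m−1} χ(a·ξ^i) satisfies S(a) = ζ_p^{ℓ^{m−1}(ℓ−1)a} + ζ_p^{−ℓ^{m−1}(ℓ−1)a} + (ℓ−1)·(ζ_p^{ℓ^{m−1}a} + ζ_p^{−ℓ^{m−1}a}) + 2ℓ^m − 2ℓ, where a in the exponents is lifted to an integer in {0,…,p−1}. -/
/-!
Put `n = 2ℓ^m`. As `p` generates `(ℤ/n)ˣ` and `[F_q : F_p] = φ(n)`, the Frobenius conjugates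
`y^(p^j)` of an `n`-th root of unity `y` are exactly the `y^u` with `u` a unit mod `n`, so
`Tr(ξ^i)` is the Ramanujan sum `c_n(i)`, which inclusion–exclusion over the primes `2` and `ℓ`
evaluates: it is `φ(n)` at `i = 0`, `-φ(n)` at `i = ℓ^m`, `-ℓ^(m-1)` resp. `ℓ^(m-1)` at the other
even resp. odd multiples of `ℓ^(m-1)`, and `0` elsewhere. Since `Tr(aξ^i) = a·Tr(ξ^i)`, counting
these `i` gives `S(a)`.
-/

open Finset

theorem IsPrimitiveRoot.zpow_eq_zpow_of_intCast_eq {G₀ : Type*} [CommGroupWithZero G₀]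
    {ζ : G₀} {k : ℕ} [NeZero k] (h : IsPrimitiveRoot ζ k) {a b : ℤ}
    (hab : (a : ZMod k) = b) : ζ ^ a = ζ ^ b := by
  obtain ⟨c, hc⟩ := (ZMod.intCast_eq_intCast_iff_dvd_sub a b k).1 hab
  rw [show b = a + k * c by omega, zpow_add₀ (h.ne_zero (NeZero.ne k)), zpow_mul,
    h.zpow_eq_one, one_zpow, mul_one]

theorem Finset.sum_range_two_mul {M : Type*} [AddCommMonoid M] (f : ℕ → M) (N : ℕ) :
    ∑ k ∈ range (2 * N), f k = ∑ j ∈ range N, (f (2 * j) + f (2 * j + 1)) := by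
  induction N with
  | zero => simp
  | succ N ih => rw [mul_add_one, sum_range_succ, sum_range_succ, sum_range_succ, ih, add_assoc]

theorem Finset.sum_range_ite_eq_of_lt {M : Type*} [AddCommMonoid M] {N j₀ : ℕ} (h : j₀ < N)
    (x c : M) : ∑ j ∈ range N, (if j = j₀ then x else c) = x + (N - 1) • c := by
  rw [sum_ite, filter_eq', filter_ne', if_pos (mem_range.2 h), sum_singleton, sum_const,
    card_erase_of_mem (mem_range.2 h), card_range]

theorem Finset.sum_filter_dvd_range_mul {M : Type*} [AddCommMonoid M] (f : ℕ → M) {d : ℕ}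
    (hd : 0 < d) (c : ℕ) :
    ∑ i ∈ (range (d * c)).filter (d ∣ ·), f i = ∑ k ∈ range c, f (d * k) := by
  rw [← sum_image fun x _ y _ h => Nat.eq_of_mul_eq_mul_left hd h]
  congr 1
  ext u
  simp only [mem_filter, mem_range, mem_image]
  constructor
  · rintro ⟨hu, k, rfl⟩
    exact ⟨k, lt_of_mul_lt_mul_left hu d.zero_le, rfl⟩
  · rintro ⟨k, hk, rfl⟩
    exact ⟨Nat.mul_lt_mul_of_pos_left hk hd, dvd_mul_right d k⟩

section RootsOfUnity

variable {K : Type*} [Field K] [DecidableEq K]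

theorem geom_sum_of_pow_eq_one {y : K} {c : ℕ} (hy : y ^ c = 1) :
    ∑ k ∈ range c, y ^ k = if y = 1 then (c : K) else 0 := by
  split_ifs with h
  · simp [h]
  · rw [geom_sum_eq h, hy, sub_self, zero_div]

theorem sum_filter_dvd_pow_of_pow_eq_one {y : K} {N d c : ℕ} (hd : 0 < d) (hN : d * c = N)
    (hy : y ^ N = 1) :
    ∑ u ∈ (range N).filter (d ∣ ·), y ^ u = if y ^ d = 1 then (c : K) else 0 := by
  subst hN
  simp_rw [sum_filter_dvd_range_mul _ hd, pow_mul]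
  exact geom_sum_of_pow_eq_one (by rwa [← pow_mul])

theorem sum_filter_coprime_pow_of_pow_eq_one {r s : ℕ} (hr : r.Prime) (hs : s.Prime)
    (hrs : r ≠ s) (a b : ℕ) {y : K} (hy : y ^ (r ^ (a + 1) * s ^ (b + 1)) = 1) :
    ∑ u ∈ (range (r ^ (a + 1) * s ^ (b + 1))).filter (r ^ (a + 1) * s ^ (b + 1)).Coprime,
        y ^ u =
      (if y = 1 then ((r ^ (a + 1) * s ^ (b + 1) : ℕ) : K) else 0)
        - (if y ^ r = 1 then ((r ^ a * s ^ (b + 1) : ℕ) : K) else 0)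
        - (if y ^ s = 1 then ((r ^ (a + 1) * s ^ b : ℕ) : K) else 0)
        + (if y ^ (r * s) = 1 then ((r ^ a * s ^ b : ℕ) : K) else 0) := by
  set N := r ^ (a + 1) * s ^ (b + 1)
  have hcoprime : ∀ u, N.Coprime u ↔ ¬ r ∣ u ∧ ¬ s ∣ u := fun u => by
    rw [Nat.coprime_mul_iff_left, Nat.coprime_pow_left_iff a.succ_pos,
      Nat.coprime_pow_left_iff b.succ_pos, hr.coprime_iff_not_dvd, hs.coprime_iff_not_dvd]
  have hmul_dvd : ∀ u, r * s ∣ u ↔ r ∣ u ∧ s ∣ u := fun u =>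
    ⟨fun h => ⟨(dvd_mul_right r s).trans h, (dvd_mul_left s r).trans h⟩,
      fun h => ((Nat.coprime_primes hr hs).2 hrs).mul_dvd_of_dvd_of_dvd h.1 h.2⟩
  have hindicator : ∀ u, (if N.Coprime u then y ^ u else 0) =
      y ^ u - (if r ∣ u then y ^ u else 0) - (if s ∣ u then y ^ u else 0)
        + (if r * s ∣ u then y ^ u else 0) := fun u => by
    simp only [hcoprime, hmul_dvd]
    by_cases h₁ : r ∣ u <;> by_cases h₂ : s ∣ u <;> simp [h₁, h₂]
  rw [sum_filter, sum_congr rfl fun u _ => hindicator u, sum_add_distrib, sum_sub_distrib,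
    sum_sub_distrib, ← sum_filter, ← sum_filter, ← sum_filter, geom_sum_of_pow_eq_one hy,
    sum_filter_dvd_pow_of_pow_eq_one (c := r ^ a * s ^ (b + 1)) hr.pos (by ring) hy,
    sum_filter_dvd_pow_of_pow_eq_one (c := r ^ (a + 1) * s ^ b) hs.pos (by ring) hy,
    sum_filter_dvd_pow_of_pow_eq_one (c := r ^ a * s ^ b) (Nat.mul_pos hr.pos hs.pos) (by ring) hy]

end RootsOfUnity

section PowersModN

variable {p n : ℕ}

theorem injOn_pow_mod_range_totient (hp : orderOf (p : ZMod n) = n.totient) :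
    Set.InjOn (fun j => p ^ j % n) (range n.totient) := by
  intro i hi j hj hij
  apply pow_injOn_Iio_orderOf (x := (p : ZMod n)) (by simpa [hp] using hi)
    (by simpa [hp] using hj)
  simpa [ZMod.natCast_mod] using congrArg (fun t : ℕ => (t : ZMod n)) hij

theorem image_pow_mod_range_totient (hp : orderOf (p : ZMod n) = n.totient) (hn : 0 < n) :
    (range n.totient).image (fun j => p ^ j % n) = (range n).filter n.Coprime := by
  have hunit : IsUnit (p : ZMod n) :=
    (orderOf_pos_iff.1 (hp ▸ Nat.totient_pos.2 hn)).isUnit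
  refine eq_of_subset_of_card_le (fun u hu => ?_) ?_
  · obtain ⟨j, -, rfl⟩ := mem_image.1 hu
    refine mem_filter.2 ⟨mem_range.2 (Nat.mod_lt _ hn), Nat.Coprime.symm ?_⟩
    rw [← ZMod.isUnit_iff_coprime, ZMod.natCast_mod, Nat.cast_pow]
    exact hunit.pow j
  · rw [← Nat.totient_eq_card_coprime, card_image_of_injOn (injOn_pow_mod_range_totient hp),
      card_range]

theorem sum_pow_pow_eq_sum_filter_coprime {R : Type*} [Semiring R]
    (hp : orderOf (p : ZMod n) = n.totient) (hn : 0 < n) {y : R} (hy : y ^ n = 1) :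
    ∑ j ∈ range n.totient, y ^ p ^ j = ∑ u ∈ (range n).filter n.Coprime, y ^ u := by
  rw [← image_pow_mod_range_totient hp hn, sum_image (injOn_pow_mod_range_totient hp)]
  exact sum_congr rfl fun j _ => pow_eq_pow_mod _ hy

end PowersModN

theorem algebraMap_trace_eq_sum_filter_coprime_pow (K L : Type*) [Field K] [Field L] [Finite L]
    [Algebra K L] {n : ℕ} (hn : 0 < n) (hK : orderOf (Nat.card K : ZMod n) = n.totient)
    (hL : Module.finrank K L = n.totient) {y : L} (hy : y ^ n = 1) :
    algebraMap K L (Algebra.trace K L y) = ∑ u ∈ (range n).filter n.Coprime, y ^ u := by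
  rw [FiniteField.algebraMap_trace_eq_sum_pow, hL, sum_pow_pow_eq_sum_filter_coprime hK hn hy]

theorem pow_pow_eq_one_iff_dvd {G : Type*} [Monoid G] {x : G} {d c : ℕ}
    (hx : orderOf x = d * c) (hd : 0 < d) (i : ℕ) : (x ^ i) ^ d = 1 ↔ c ∣ i := by
  rw [← pow_mul, ← orderOf_dvd_iff_pow_eq_one, hx, mul_comm i, Nat.mul_dvd_mul_iff_left hd]

theorem Nat.pow_orderOf_modEq_one (p n : ℕ) : p ^ orderOf (p : ZMod n) ≡ 1 [MOD n] := by
  rw [← ZMod.natCast_eq_natCast_iff, Nat.cast_pow, Nat.cast_one, pow_orderOf_eq_one]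

theorem Module.finrank_zmod_eq_of_card_eq_pow {p : ℕ} [Fact p.Prime] {F : Type*} [Field F]
    [Fintype F] [Algebra (ZMod p) F] {e : ℕ} (hq : Fintype.card F = p ^ e) :
    Module.finrank (ZMod p) F = e := by
  apply Nat.pow_right_injective (Fact.out : p.Prime).two_le
  dsimp only
  rw [← hq, Module.card_eq_pow_finrank (K := ZMod p), ZMod.card]

theorem orderOf_eq_card_sub_one_of_forall_eq_pow {F : Type*} [Field F] [Fintype F]
    (hF : 2 < Fintype.card F) {g : F} (hg : ∀ x : F, x ≠ 0 → ∃ k : ℕ, x = g ^ k) :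
    orderOf g = Fintype.card F - 1 := by
  classical
  have hg0 : g ≠ 0 := by
    rintro rfl
    have hsub : (univ : Finset F) ⊆ {0, 1} := fun x _ => by
      obtain rfl | hx := eq_or_ne x 0
      · simp
      obtain ⟨k, rfl⟩ := hg x hx
      rcases k with _ | k <;> simp
    exact hF.not_ge ((card_le_card hsub).trans (card_le_two))
  have hgen : ∀ x : Fˣ, x ∈ Subgroup.zpowers (Units.mk0 g hg0) := fun x => by
    obtain ⟨k, hk⟩ := hg x x.ne_zero
    exact ⟨k, Units.ext (by simp [hk])⟩
  rw [← Units.val_mk0 hg0, orderOf_units, orderOf_eq_card_of_forall_mem_zpowers hgen,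
    Nat.card_eq_fintype_card, Fintype.card_units]

/-- The Ramanujan sum `c_{2ℓ^(m+1)}(i)`, written out by inclusion–exclusion over the primes
`2` and `ℓ`. -/
def ramanujanSumTwoMulPow (ℓ m i : ℕ) : ℤ :=
  (if 2 * ℓ ^ (m + 1) ∣ i then 2 * (ℓ : ℤ) ^ (m + 1) else 0)
    - (if ℓ ^ (m + 1) ∣ i then (ℓ : ℤ) ^ (m + 1) else 0)
    - (if 2 * ℓ ^ m ∣ i then 2 * (ℓ : ℤ) ^ m else 0)
    + (if ℓ ^ m ∣ i then (ℓ : ℤ) ^ m else 0)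

section RamanujanSum

variable {ℓ : ℕ} (m : ℕ)

theorem ramanujanSumTwoMulPow_of_not_dvd {i : ℕ} (h : ¬ ℓ ^ m ∣ i) :
    ramanujanSumTwoMulPow ℓ m i = 0 := by
  have h₁ : ¬ 2 * ℓ ^ (m + 1) ∣ i := fun h' => h (Dvd.dvd.trans ⟨2 * ℓ, by ring⟩ h')
  have h₂ : ¬ ℓ ^ (m + 1) ∣ i := fun h' => h ((pow_dvd_pow ℓ m.le_succ).trans h')
  have h₃ : ¬ 2 * ℓ ^ m ∣ i := fun h' => h ((dvd_mul_left _ 2).trans h')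
  simp [ramanujanSumTwoMulPow, h, h₁, h₂, h₃]

theorem ramanujanSumTwoMulPow_pow_mul (hℓ : 0 < ℓ) (k : ℕ) :
    ramanujanSumTwoMulPow ℓ m (ℓ ^ m * k) =
      (if 2 * ℓ ∣ k then 2 * (ℓ : ℤ) ^ (m + 1) else 0)
        - (if ℓ ∣ k then (ℓ : ℤ) ^ (m + 1) else 0)
        - (if 2 ∣ k then 2 * (ℓ : ℤ) ^ m else 0) + (ℓ : ℤ) ^ m := by
  have hℓm : 0 < ℓ ^ m := pow_pos hℓ m
  have e₁ : 2 * ℓ ^ (m + 1) ∣ ℓ ^ m * k ↔ 2 * ℓ ∣ k := by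
    rw [show 2 * ℓ ^ (m + 1) = ℓ ^ m * (2 * ℓ) by ring, Nat.mul_dvd_mul_iff_left hℓm]
  have e₂ : ℓ ^ (m + 1) ∣ ℓ ^ m * k ↔ ℓ ∣ k := by
    rw [pow_succ, Nat.mul_dvd_mul_iff_left hℓm]
  have e₃ : 2 * ℓ ^ m ∣ ℓ ^ m * k ↔ 2 ∣ k := by
    rw [mul_comm 2, Nat.mul_dvd_mul_iff_left hℓm]
  simp only [ramanujanSumTwoMulPow, e₁, e₂, e₃, dvd_mul_right, if_true]

theorem ramanujanSumTwoMulPow_pow_mul_even (hℓ : Odd ℓ) {j : ℕ} (hj : j < ℓ) :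
    ramanujanSumTwoMulPow ℓ m (ℓ ^ m * (2 * j)) =
      if j = 0 then (ℓ : ℤ) ^ m * (ℓ - 1) else -(ℓ : ℤ) ^ m := by
  have hdvd : ℓ ∣ j ↔ j = 0 :=
    ⟨fun h => Nat.eq_zero_of_dvd_of_lt h hj, by rintro rfl; exact dvd_zero ℓ⟩
  rw [ramanujanSumTwoMulPow_pow_mul m hℓ.pos]
  simp only [Nat.mul_dvd_mul_iff_left two_pos, hℓ.coprime_two_right.dvd_mul_left, hdvd,
    dvd_mul_right, if_true]
  split_ifs <;> ring

theorem ramanujanSumTwoMulPow_pow_mul_odd (hℓ : Odd ℓ) {j : ℕ} (hj : j < ℓ) :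
    ramanujanSumTwoMulPow ℓ m (ℓ ^ m * (2 * j + 1)) =
      if j = ℓ / 2 then -((ℓ : ℤ) ^ m * (ℓ - 1)) else (ℓ : ℤ) ^ m := by
  have hdvd : ℓ ∣ 2 * j + 1 ↔ j = ℓ / 2 := by
    obtain ⟨t, rfl⟩ := hℓ
    constructor
    · rintro ⟨c, hc⟩
      rcases c with _ | _ | c <;> [omega; omega; nlinarith]
    · rintro rfl
      exact ⟨1, by omega⟩
  have h₂ : ¬ 2 ∣ 2 * j + 1 := by omega
  have h₂ℓ : ¬ 2 * ℓ ∣ 2 * j + 1 := fun h => h₂ ((dvd_mul_right 2 ℓ).trans h)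
  rw [ramanujanSumTwoMulPow_pow_mul m hℓ.pos, if_neg h₂, if_neg h₂ℓ]
  simp only [hdvd]
  split_ifs <;> ring

theorem sum_range_ramanujanSumTwoMulPow (hℓ : Odd ℓ) {M : Type*} [AddCommMonoid M]
    (f : ℤ → M) :
    ∑ i ∈ range (2 * ℓ ^ (m + 1)), f (ramanujanSumTwoMulPow ℓ m i) =
      f ((ℓ : ℤ) ^ m * (ℓ - 1)) + f (-((ℓ : ℤ) ^ m * (ℓ - 1)))
        + (ℓ - 1) • (f ((ℓ : ℤ) ^ m) + f (-(ℓ : ℤ) ^ m))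
        + (2 * ℓ ^ (m + 1) - 2 * ℓ) • f 0 := by
  have hℓm : 0 < ℓ ^ m := pow_pos hℓ.pos m
  have hN : 2 * ℓ ^ (m + 1) = ℓ ^ m * (2 * ℓ) := by ring
  have heven : ∑ j ∈ range ℓ, f (ramanujanSumTwoMulPow ℓ m (ℓ ^ m * (2 * j))) =
      f ((ℓ : ℤ) ^ m * (ℓ - 1)) + (ℓ - 1) • f (-(ℓ : ℤ) ^ m) := by
    rw [sum_congr rfl fun j hj => by
      rw [ramanujanSumTwoMulPow_pow_mul_even m hℓ (mem_range.1 hj), apply_ite f]]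
    exact sum_range_ite_eq_of_lt hℓ.pos _ _
  have hodd : ∑ j ∈ range ℓ, f (ramanujanSumTwoMulPow ℓ m (ℓ ^ m * (2 * j + 1))) =
      f (-((ℓ : ℤ) ^ m * (ℓ - 1))) + (ℓ - 1) • f ((ℓ : ℤ) ^ m) := by
    rw [sum_congr rfl fun j hj => by
      rw [ramanujanSumTwoMulPow_pow_mul_odd m hℓ (mem_range.1 hj), apply_ite f]]
    exact sum_range_ite_eq_of_lt (Nat.div_lt_self hℓ.pos one_lt_two) _ _
  have hcard : ((range (ℓ ^ m * (2 * ℓ))).filter (¬ ℓ ^ m ∣ ·)).card =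
      ℓ ^ m * (2 * ℓ) - 2 * ℓ := by
    have hdvd : ((range (ℓ ^ m * (2 * ℓ))).filter (ℓ ^ m ∣ ·)).card = 2 * ℓ := by
      rw [card_eq_sum_ones, sum_filter_dvd_range_mul _ hℓm, sum_const, card_range, smul_eq_mul,
        mul_one]
    have := card_filter_add_card_filter_not (s := range (ℓ ^ m * (2 * ℓ))) (ℓ ^ m ∣ ·)
    rw [card_range] at this
    omega
  have hrest : ∑ i ∈ (range (ℓ ^ m * (2 * ℓ))).filter (¬ ℓ ^ m ∣ ·),
      f (ramanujanSumTwoMulPow ℓ m i) = (ℓ ^ m * (2 * ℓ) - 2 * ℓ) • f 0 := by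
    rw [sum_congr rfl fun i hi => by
      rw [ramanujanSumTwoMulPow_of_not_dvd m (mem_filter.1 hi).2], sum_const, hcard]
  rw [hN, ← sum_filter_add_sum_filter_not _ (ℓ ^ m ∣ ·), sum_filter_dvd_range_mul _ hℓm,
    sum_range_two_mul, sum_add_distrib, heven, hodd, hrest, smul_add]
  abel

theorem sum_range_zpow_mul_ramanujanSumTwoMulPow (hℓ : Odd ℓ) {K : Type*} [Field K] (x : K)
    (c : ℤ) :
    ∑ i ∈ range (2 * ℓ ^ (m + 1)), x ^ (ramanujanSumTwoMulPow ℓ m i * c) =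
      x ^ ((ℓ : ℤ) ^ m * (ℓ - 1) * c) + x ^ (-((ℓ : ℤ) ^ m * (ℓ - 1) * c))
        + ((ℓ : K) - 1) * (x ^ ((ℓ : ℤ) ^ m * c) + x ^ (-((ℓ : ℤ) ^ m * c)))
        + 2 * (ℓ : K) ^ (m + 1) - 2 * ℓ := by
  have h2ℓ : 2 * ℓ ≤ 2 * ℓ ^ (m + 1) :=
    Nat.mul_le_mul_left 2 (Nat.le_self_pow m.succ_ne_zero ℓ)
  rw [sum_range_ramanujanSumTwoMulPow m hℓ fun k => x ^ (k * c), zero_mul, zpow_zero,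
    neg_mul, neg_mul, nsmul_eq_mul, nsmul_eq_mul, Nat.cast_sub h2ℓ, Nat.cast_sub hℓ.pos]
  push_cast
  ring

end RamanujanSum

theorem trace_pow_eq_ramanujanSumTwoMulPow (K L : Type*) [Field K] [Field L] [Finite L]
    [Algebra K L] {ℓ m : ℕ} (hℓ : ℓ.Prime) (hℓ2 : ℓ ≠ 2)
    (hK : orderOf (Nat.card K : ZMod (2 * ℓ ^ (m + 1))) = (2 * ℓ ^ (m + 1)).totient)
    (hL : Module.finrank K L = (2 * ℓ ^ (m + 1)).totient) {ξ : L}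
    (hξ : orderOf ξ = 2 * ℓ ^ (m + 1)) (i : ℕ) :
    Algebra.trace K L (ξ ^ i) = ramanujanSumTwoMulPow ℓ m i := by
  classical
  have hℓpos := hℓ.pos
  have hy : (ξ ^ i) ^ (2 * ℓ ^ (m + 1)) = 1 := by
    rw [← pow_mul, mul_comm, pow_mul, ← hξ, pow_orderOf_eq_one, one_pow]
  have hsum := sum_filter_coprime_pow_of_pow_eq_one Nat.prime_two hℓ hℓ2.symm 0 m
    (by simpa using hy)
  simp only [pow_zero, zero_add, pow_one, one_mul] at hsum
  have h₁ : ξ ^ i = 1 ↔ 2 * ℓ ^ (m + 1) ∣ i := hξ ▸ orderOf_dvd_iff_pow_eq_one.symm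
  have h₂ := pow_pow_eq_one_iff_dvd hξ two_pos i
  have h₃ := pow_pow_eq_one_iff_dvd (hξ.trans (by ring : _ = ℓ * (2 * ℓ ^ m))) hℓpos i
  have h₄ := pow_pow_eq_one_iff_dvd (hξ.trans (by ring : _ = 2 * ℓ * ℓ ^ m))
    (by positivity) i
  apply (algebraMap K L).injective
  rw [map_intCast, algebraMap_trace_eq_sum_filter_coprime_pow K L (by positivity) hK hL hy, hsum]
  simp only [h₁, h₂, h₃, h₄, ramanujanSumTwoMulPow]
  push_cast
  congr

theorem statement_0_general (p ℓ m : ℕ) (hp : p.Prime) (hpodd : Odd p)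
    (hℓ : ℓ.Prime) (hℓodd : Odd ℓ) (hm : 0 < m)
    (hprim : orderOf ((p : ZMod (2 * ℓ ^ m))) = (2 * ℓ ^ m).totient)
    (F : Type*) [Field F] [Fintype F] [Algebra (ZMod p) F]
    (hq : Fintype.card F = p ^ (2 * ℓ ^ m).totient)
    (g : F) (hg : ∀ x : F, x ≠ 0 → ∃ k : ℕ, x = g ^ k)
    (ξ : F) (hξ : ξ = g ^ ((Fintype.card F - 1) / (2 * ℓ ^ m)))
    (a : ZMod p) :
    (∑ i ∈ Finset.range (2 * ℓ ^ m),
        Complex.exp (2 * Real.pi * Complex.I / p) ^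
          ((Algebra.trace (ZMod p) F (algebraMap (ZMod p) F a * ξ ^ i)).val : ℤ)) =
      Complex.exp (2 * Real.pi * Complex.I / p) ^ ((ℓ ^ (m - 1) * (ℓ - 1) * a.val : ℕ) : ℤ) +
        Complex.exp (2 * Real.pi * Complex.I / p) ^ (-((ℓ ^ (m - 1) * (ℓ - 1) * a.val : ℕ) : ℤ)) +
        ((ℓ : ℂ) - 1) *
          (Complex.exp (2 * Real.pi * Complex.I / p) ^ ((ℓ ^ (m - 1) * a.val : ℕ) : ℤ) +
            Complex.exp (2 * Real.pi * Complex.I / p) ^ (-((ℓ ^ (m - 1) * a.val : ℕ) : ℤ))) +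
        2 * (ℓ : ℂ) ^ m - 2 * ℓ := by
  have := Fact.mk hp
  obtain ⟨m, rfl⟩ : ∃ m', m = m' + 1 := ⟨m - 1, by omega⟩
  set n := 2 * ℓ ^ (m + 1)
  have hℓ2 : ℓ ≠ 2 := by rintro rfl; exact absurd hℓodd (by decide)
  have hn : 0 < n := by have := hℓ.pos; positivity
  have hF : 2 < Fintype.card F := by
    have := hp.two_le
    have := Nat.le_self_pow (Nat.totient_pos.2 hn).ne' p
    rcases hpodd with ⟨k, rfl⟩
    omega
  have hn_dvd : n ∣ Fintype.card F - 1 := by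
    rw [hq, ← hprim]
    exact (Nat.modEq_iff_dvd' (Nat.one_le_pow _ _ hp.pos)).1 (Nat.pow_orderOf_modEq_one p n).symm
  have hg_order := orderOf_eq_card_sub_one_of_forall_eq_pow hF hg
  have hξ_order : orderOf ξ = n := by
    rw [hξ, ← hg_order]
    exact orderOf_pow_orderOf_div (by omega) (hg_order ▸ hn_dvd)
  have hζ := Complex.isPrimitiveRoot_exp p hp.ne_zero
  have hsummand : ∀ i, Complex.exp (2 * Real.pi * Complex.I / p) ^
      ((Algebra.trace (ZMod p) F (algebraMap (ZMod p) F a * ξ ^ i)).val : ℤ) =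
      Complex.exp (2 * Real.pi * Complex.I / p) ^ (ramanujanSumTwoMulPow ℓ m i * a.val) :=
    fun i => hζ.zpow_eq_zpow_of_intCast_eq <| by
      rw [← Algebra.smul_def, map_smul, smul_eq_mul, trace_pow_eq_ramanujanSumTwoMulPow _ _ hℓ
        hℓ2 (by rwa [Nat.card_zmod]) (Module.finrank_zmod_eq_of_card_eq_pow hq) hξ_order]
      simp [mul_comm]
  rw [Finset.sum_congr rfl fun i _ => hsummand i, sum_range_zpow_mul_ramanujanSumTwoMulPow m hℓodd]
  push_cast [Nat.add_sub_cancel, Nat.cast_sub hℓ.one_le]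
  rfl

/-- Explicit value of `S(a) = ∑_{i=0}^{2ℓ^m−1} χ(a·ξ^i)` for `a` in the
prime field `F_p` (Corollary 2.3 of the paper). -/
theorem statement_0 (p ℓ m : ℕ) (hp : p.Prime) (hpodd : Odd p)
    (hℓ : ℓ.Prime) (hℓodd : Odd ℓ) (hℓp : ℓ ≠ p) (hm : 0 < m)
    (hprim : orderOf ((p : ZMod (2 * ℓ ^ m))) = (2 * ℓ ^ m).totient)
    (F : Type*) [Field F] [Fintype F] [Algebra (ZMod p) F]
    (hq : Fintype.card F = p ^ (2 * ℓ ^ m).totient)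
    (g : F) (hg : ∀ x : F, x ≠ 0 → ∃ k : ℕ, x = g ^ k)
    (ξ : F) (hξ : ξ = g ^ ((Fintype.card F - 1) / (2 * ℓ ^ m)))
    (a : ZMod p) :
    (∑ i ∈ Finset.range (2 * ℓ ^ m),
        Complex.exp (2 * Real.pi * Complex.I / p) ^
          ((Algebra.trace (ZMod p) F (algebraMap (ZMod p) F a * ξ ^ i)).val : ℤ)) =
      Complex.exp (2 * Real.pi * Complex.I / p) ^ ((ℓ ^ (m - 1) * (ℓ - 1) * a.val : ℕ) : ℤ) +
        Complex.exp (2 * Real.pi * Complex.I / p) ^ (-((ℓ ^ (m - 1) * (ℓ - 1) * a.val : ℕ) : ℤ)) +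
        ((ℓ : ℂ) - 1) *
          (Complex.exp (2 * Real.pi * Complex.I / p) ^ ((ℓ ^ (m - 1) * a.val : ℕ) : ℤ) +
            Complex.exp (2 * Real.pi * Complex.I / p) ^ (-((ℓ ^ (m - 1) * a.val : ℕ) : ℤ))) +
        2 * (ℓ : ℂ) ^ m - 2 * ℓ :=
  statement_0_general p ℓ m hp hpodd hℓ hℓodd hm hprim F hq g hg ξ hξ a
end

section
/- Let β ∈ F_q^*. If d ≤ (2 − 4/√5)^{1/2}·q^{1/4} (equivalently d² ≤ (2 − 4/√5)·√q), then for any integers j₁, j₂ with 0 ≤ j₁, j₂ ≤ q−2 there exists γ ∈ F_q^* with γ ≠ β and γ ≠ −β such that β + γ ∈ C_{j₁} and β − γ ∈ C_{j₂}. -/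
/-!
Take a character `χ` of order `d` on `F`. Then `y ∈ C_j` iff `χ (g⁻ʲ y) = 1`, and `d` times the
indicator of this condition is `∑_{m < d} χᵐ (g⁻ʲ y)`. Counting the admissible `γ` in this way,
`d² N = ∑_{m, m' < d} ∑_γ χᵐ (a₁ (β + γ)) χᵐ' (a₂ (β - γ))` with `aᵢ = g⁻ʲⁱ`. The substitution
`γ = 2βt - β` turns each inner sum into a unit multiple of the Jacobi sum `J (χᵐ, χᵐ')`. This is
`q - 2` for `m = m' = 0` and has absolute value at most `√q` otherwise, so
`|d² N - (q - 2)| ≤ (d² - 1) √q`. The bound on `d` makes this force `N ≥ 2`, so some admissible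
`γ` is non-zero. It is not `±β` because `0` lies in no cyclotomic class.
-/

open Finset

namespace MulChar

variable {F : Type*} [Field F]

lemma apply_pow_orderOf {R : Type*} [CommRing R] (χ : MulChar F R) {x : F} (hx : x ≠ 0) :
    χ x ^ orderOf χ = 1 := by
  have h := pow_apply_coe χ (orderOf χ) (Units.mk0 x hx)
  rw [pow_orderOf_eq_one, one_apply_coe, Units.val_mk0] at h
  exact h.symm

lemma sum_range_orderOf_pow_apply {R : Type*} [Field R] [DecidableEq R] (χ : MulChar F R)
    (z : F) :
    ∑ m ∈ range (orderOf χ), (χ ^ m) z = if χ z = 1 then (orderOf χ : R) else 0 := by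
  rcases eq_or_ne z 0 with rfl | hz
  · simp
  have hpow (m : ℕ) : (χ ^ m) z = χ z ^ m := pow_apply_coe χ m (Units.mk0 z hz)
  simp only [hpow]
  split_ifs with h
  · simp [h]
  · rw [geom_sum_eq h, apply_pow_orderOf χ hz, sub_self, zero_div]

variable [Fintype F]

lemma apply_eq_one_iff_exists_pow {R : Type*} [CommRing R] [Nontrivial R] (χ : MulChar F R)
    {g : F} (hg : ∀ x : F, x ≠ 0 → ∃ k : ℕ, x = g ^ k) {z : F} :
    χ z = 1 ↔ ∃ x : F, x ≠ 0 ∧ z = x ^ orderOf χ := by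
  constructor
  · intro hz
    have hz0 : z ≠ 0 := by rintro rfl; simp at hz
    obtain ⟨k, rfl⟩ := hg _ hz0
    have hχk : χ ^ k = 1 := by
      ext u
      obtain ⟨l, hl⟩ := hg u u.ne_zero
      rw [pow_apply_coe, one_apply_coe, hl, map_pow, ← pow_mul, mul_comm, pow_mul, ← map_pow,
        hz, one_pow]
    obtain ⟨m, rfl⟩ := orderOf_dvd_of_pow_eq_one hχk
    refine ⟨g ^ m, fun h ↦ hz0 ?_, by ring⟩
    rw [pow_mul', h, zero_pow χ.orderOf_pos.ne']
  · rintro ⟨x, hx, rfl⟩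
    rw [map_pow, apply_pow_orderOf χ hx]

lemma apply_inv_mul_eq_one_iff {R : Type*} [CommRing R] [Nontrivial R] (χ : MulChar F R)
    {g : F} (hg : ∀ x : F, x ≠ 0 → ∃ k : ℕ, x = g ^ k) {c : F} (hc : c ≠ 0) {y : F} :
    χ (c⁻¹ * y) = 1 ↔ ∃ x : F, x ≠ 0 ∧ y = c * x ^ orderOf χ := by
  simp only [apply_eq_one_iff_exists_pow χ hg, inv_mul_eq_iff_eq_mul₀ hc]

lemma norm_apply_le_one (χ : MulChar F ℂ) (a : F) : ‖χ a‖ ≤ 1 := by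
  classical
  rcases eq_or_ne a 0 with rfl | ha
  · simp
  · exact (Complex.norm_eq_one_of_mem_rootsOfUnity (χ.apply_mem_rootsOfUnity (Units.mk0 a ha))).le

end MulChar

lemma lt_sq_sub_two_sub_mul {D x : ℝ} (hD : 1 ≤ D) (hx : 0 ≤ x) (h : D ≤ (2 - 4 / √5) * x) :
    D < x ^ 2 - 2 - (D - 1) * x := by
  have hsqrt5 : √5 < 16 / 7 := (Real.sqrt_lt' (by norm_num)).mpr (by norm_num)
  have hc : 2 - 4 / √5 < 1 / 4 := by
    have : 7 / 4 < 4 / √5 := by rw [lt_div_iff₀ (by positivity)]; linarith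
    linarith
  have hDx : D ≤ x / 4 := h.trans (by nlinarith)
  nlinarith

section

variable {F : Type*} [Field F] [Fintype F]

lemma star_jacobiSum (χ φ : MulChar F ℂ) : star (jacobiSum χ φ) = jacobiSum χ⁻¹ φ⁻¹ := by
  simp only [jacobiSum, star_sum, star_mul', MulChar.star_apply']

lemma norm_jacobiSum_le_sqrt {χ φ : MulChar F ℂ} (h : χ ≠ 1 ∨ φ ≠ 1) :
    ‖jacobiSum χ φ‖ ≤ √(Fintype.card F) := by
  have hone : (1 : ℝ) ≤ √(Fintype.card F) :=
    Real.one_le_sqrt.mpr (by exact_mod_cast Fintype.card_pos)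
  by_cases hχ : χ = 1
  · rw [hχ, jacobiSum_one_nontrivial (h.resolve_left (not_not.mpr hχ)), norm_neg, norm_one]
    exact hone
  by_cases hφ : φ = 1
  · rw [hφ, jacobiSum_comm, jacobiSum_one_nontrivial hχ, norm_neg, norm_one]
    exact hone
  by_cases hχφ : χ * φ = 1
  · rw [eq_inv_of_mul_eq_one_right hχφ, jacobiSum_nontrivial_inv hχ, norm_neg]
    exact (MulChar.norm_apply_le_one χ _).trans hone
  have hchar : ringChar ℂ ≠ ringChar F := by
    rw [ringChar.eq_zero]; exact (CharP.ringChar_ne_zero_of_finite F).symm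
  have hnormSq : Complex.normSq (jacobiSum χ φ) = Fintype.card F := by
    exact_mod_cast (Complex.mul_conj _).symm.trans
      ((star_jacobiSum χ φ ▸ jacobiSum_mul_jacobiSum_inv hchar hχ hφ hχφ))
  rw [Complex.norm_def, hnormSq]

lemma sum_apply_mul_add_mul_apply_mul_sub {R : Type*} [CommRing R] (χ φ : MulChar F R)
    (a b : F) {β : F} (hβ : 2 * β ≠ 0) :
    ∑ γ : F, χ (a * (β + γ)) * φ (b * (β - γ)) =
      χ (2 * a * β) * φ (2 * b * β) * jacobiSum χ φ := by
  rw [jacobiSum, mul_sum]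
  refine (Fintype.sum_equiv ((Equiv.mulLeft₀ (2 * β) hβ).trans (Equiv.subRight β)) _ _
    fun t ↦ ?_).symm
  simp only [Equiv.trans_apply, Equiv.mulLeft₀_apply, Equiv.subRight_apply]
  rw [show a * (β + (2 * β * t - β)) = 2 * a * β * t by ring,
    show b * (β - (2 * β * t - β)) = 2 * b * β * (1 - t) by ring,
    map_mul χ (2 * a * β) t, map_mul φ (2 * b * β) (1 - t)]
  ring

lemma card_mul_orderOf_sq_eq_sum (χ : MulChar F ℂ) (a₁ a₂ β : F) :
    (#{γ | χ (a₁ * (β + γ)) = 1 ∧ χ (a₂ * (β - γ)) = 1} : ℂ) * (orderOf χ : ℂ) ^ 2 =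
      ∑ p ∈ range (orderOf χ) ×ˢ range (orderOf χ),
        ∑ γ : F, (χ ^ p.1) (a₁ * (β + γ)) * (χ ^ p.2) (a₂ * (β - γ)) := by
  rw [sum_comm]
  simp_rw [sum_product, ← sum_mul_sum, MulChar.sum_range_orderOf_pow_apply,
    ite_zero_mul_ite_zero]
  rw [← sum_filter, sum_const, nsmul_eq_mul, sq]

lemma norm_sum_apply_mul_add_mul_apply_mul_sub_le {χ φ : MulChar F ℂ} (h : χ ≠ 1 ∨ φ ≠ 1)
    (a b : F) {β : F} (hβ : 2 * β ≠ 0) :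
    ‖∑ γ : F, χ (a * (β + γ)) * φ (b * (β - γ))‖ ≤ √(Fintype.card F) := by
  rw [sum_apply_mul_add_mul_apply_mul_sub χ φ a b hβ, norm_mul, norm_mul]
  calc _ ≤ 1 * 1 * ‖jacobiSum χ φ‖ := by
        gcongr <;> exact MulChar.norm_apply_le_one _ _
    _ ≤ √(Fintype.card F) := by simpa using norm_jacobiSum_le_sqrt h

lemma abs_card_mul_orderOf_sq_sub_le (χ : MulChar F ℂ) {a₁ a₂ β : F} (ha₁ : a₁ ≠ 0)
    (ha₂ : a₂ ≠ 0) (hβ : 2 * β ≠ 0) :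
    |(#{γ | χ (a₁ * (β + γ)) = 1 ∧ χ (a₂ * (β - γ)) = 1} : ℝ) * orderOf χ ^ 2 -
        (Fintype.card F - 2)| ≤ (orderOf χ ^ 2 - 1) * √(Fintype.card F) := by
  set d := orderOf χ
  set T : ℕ × ℕ → ℂ := fun p ↦ ∑ γ : F, (χ ^ p.1) (a₁ * (β + γ)) * (χ ^ p.2) (a₂ * (β - γ))
  have h00 : ((0, 0) : ℕ × ℕ) ∈ range d ×ˢ range d := by simp [d, χ.orderOf_pos]
  have hT00 : T (0, 0) = Fintype.card F - 2 := by
    simp only [T, pow_zero]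
    rw [sum_apply_mul_add_mul_apply_mul_sub _ _ _ _ hβ, jacobiSum_one_one,
      MulChar.one_apply (mul_right_comm 2 a₁ β ▸ mul_ne_zero hβ ha₁).isUnit,
      MulChar.one_apply (mul_right_comm 2 a₂ β ▸ mul_ne_zero hβ ha₂).isUnit, one_mul, one_mul]
  have hT (p) (hp : p ∈ (range d ×ˢ range d).erase (0, 0)) : ‖T p‖ ≤ √(Fintype.card F) := by
    simp only [mem_erase, mem_product, mem_range, Ne, Prod.ext_iff, not_and_or] at hp
    refine norm_sum_apply_mul_add_mul_apply_mul_sub_le ?_ _ _ hβ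
    rcases hp with ⟨hp | hp, h₁, h₂⟩
    · exact .inl (pow_ne_one_of_lt_orderOf hp h₁)
    · exact .inr (pow_ne_one_of_lt_orderOf hp h₂)
  have hcard : (((range d ×ˢ range d).erase (0, 0)).card : ℝ) = d ^ 2 - 1 := by
    rw [card_erase_of_mem h00, card_product, card_range,
      Nat.cast_sub (by nlinarith [χ.orderOf_pos])]
    push_cast; ring
  calc _ = ‖(#{γ | χ (a₁ * (β + γ)) = 1 ∧ χ (a₂ * (β - γ)) = 1} : ℂ) * (d : ℂ) ^ 2 -
        (Fintype.card F - 2)‖ := by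
        rw [← Real.norm_eq_abs, ← Complex.norm_real]; push_cast; rfl
    _ = ‖∑ p ∈ (range d ×ˢ range d).erase (0, 0), T p‖ := by
        have hsum : (#{γ | χ (a₁ * (β + γ)) = 1 ∧ χ (a₂ * (β - γ)) = 1} : ℂ) * (d : ℂ) ^ 2 =
            ∑ p ∈ range d ×ˢ range d, T p := card_mul_orderOf_sq_eq_sum χ a₁ a₂ β
        rw [hsum, ← sum_erase_add _ _ h00, hT00, add_sub_cancel_right]
    _ ≤ ∑ p ∈ (range d ×ˢ range d).erase (0, 0), ‖T p‖ := norm_sum_le _ _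
    _ ≤ ∑ p ∈ (range d ×ˢ range d).erase (0, 0), √(Fintype.card F) := sum_le_sum hT
    _ = (d ^ 2 - 1) * √(Fintype.card F) := by rw [sum_const, nsmul_eq_mul, hcard]

lemma one_lt_card_of_orderOf_sq_le (χ : MulChar F ℂ) {a₁ a₂ β : F} (ha₁ : a₁ ≠ 0)
    (ha₂ : a₂ ≠ 0) (hβ : 2 * β ≠ 0)
    (hsmall : (orderOf χ : ℝ) ^ 2 ≤ (2 - 4 / √5) * √(Fintype.card F)) :
    1 < #{γ | χ (a₁ * (β + γ)) = 1 ∧ χ (a₂ * (β - γ)) = 1} := by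
  have hd : (1 : ℝ) ≤ (orderOf χ : ℝ) ^ 2 := one_le_pow₀ (by exact_mod_cast χ.orderOf_pos)
  have hnum := lt_sq_sub_two_sub_mul hd (Real.sqrt_nonneg _) hsmall
  rw [Real.sq_sqrt (Nat.cast_nonneg _)] at hnum
  have hcount := (abs_le.mp (abs_card_mul_orderOf_sq_sub_le χ ha₁ ha₂ hβ)).1
  by_contra! hN
  have : (#{γ | χ (a₁ * (β + γ)) = 1 ∧ χ (a₂ * (β - γ)) = 1} : ℝ) ≤ 1 := by exact_mod_cast hN
  nlinarith

end

theorem statement_2_general (F : Type*) [Field F] [Fintype F]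
    (q : ℕ) (hq : Fintype.card F = q) (hqodd : Odd q)
    (g : F) (hg : ∀ x : F, x ≠ 0 → ∃ k : ℕ, x = g ^ k)
    (d : ℕ) (hd : 0 < d) (hdvd : d ∣ q - 1)
    (hsmall : (d : ℝ) ^ 2 ≤ (2 - 4 / Real.sqrt 5) * Real.sqrt q)
    (β : F) (hβ : β ≠ 0) :
    ∀ j₁ j₂ : ℕ, j₁ ≤ q - 2 → j₂ ≤ q - 2 →
      ∃ γ : F, γ ≠ 0 ∧ γ ≠ β ∧ γ ≠ -β ∧
        (∃ x : F, x ≠ 0 ∧ β + γ = g ^ j₁ * x ^ d) ∧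
        (∃ x : F, x ≠ 0 ∧ β - γ = g ^ j₂ * x ^ d) := by
  intro j₁ j₂ _ _
  subst hq
  have hchar : ringChar F ≠ 2 := by
    rw [Ne, FiniteField.even_card_iff_char_two, ← Nat.even_iff, Nat.not_even_iff_odd]
    exact hqodd
  have hg0 : g ≠ 0 := by
    rintro rfl
    obtain ⟨_ | k, hk⟩ := hg (-1) (neg_ne_zero.mpr one_ne_zero)
    · exact Ring.neg_one_ne_one_of_char_ne_two hchar (hk.trans (pow_zero 0))
    · simp at hk
  obtain ⟨χ, rfl⟩ := MulChar.exists_mulChar_orderOf F hdvd (Complex.isPrimitiveRoot_exp d hd.ne')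
  obtain ⟨γ, hγ, hγ0⟩ := exists_mem_ne (one_lt_card_of_orderOf_sq_le χ
    (inv_ne_zero (pow_ne_zero j₁ hg0)) (inv_ne_zero (pow_ne_zero j₂ hg0))
    (mul_ne_zero (Ring.two_ne_zero hchar) hβ) hsmall) 0
  obtain ⟨h₁, h₂⟩ := (mem_filter.mp hγ).2
  refine ⟨γ, hγ0, ?_, ?_, (χ.apply_inv_mul_eq_one_iff hg (pow_ne_zero _ hg0)).mp h₁,
    (χ.apply_inv_mul_eq_one_iff hg (pow_ne_zero _ hg0)).mp h₂⟩
  · rintro rfl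
    simp [MulChar.map_zero] at h₂
  · rintro rfl
    simp [MulChar.map_zero] at h₁

/-- Lemma 2.5 of the paper. If `d² ≤ (2 − 4/√5)·√q`, then for any
`0 ≤ j₁, j₂ ≤ q−2` there is `γ ∈ F_q^* ∖ {±β}` with `β + γ ∈ C_{j₁}` and `β − γ ∈ C_{j₂}`. -/
theorem statement_2 (F : Type*) [Field F] [Fintype F]
    (q : ℕ) (hq : Fintype.card F = q) (hqpp : IsPrimePow q) (hqodd : Odd q) (hq3 : q ≠ 3)
    (g : F) (hg : ∀ x : F, x ≠ 0 → ∃ k : ℕ, x = g ^ k)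
    (d : ℕ) (hd : 0 < d) (hdvd : d ∣ q - 1)
    (hsmall : (d : ℝ) ^ 2 ≤ (2 - 4 / Real.sqrt 5) * Real.sqrt q)
    (β : F) (hβ : β ≠ 0) :
    ∀ j₁ j₂ : ℕ, j₁ ≤ q - 2 → j₂ ≤ q - 2 →
      ∃ γ : F, γ ≠ 0 ∧ γ ≠ β ∧ γ ≠ -β ∧
        (∃ x : F, x ≠ 0 ∧ β + γ = g ^ j₁ * x ^ d) ∧
        (∃ x : F, x ≠ 0 ∧ β - γ = g ^ j₂ * x ^ d) :=
  statement_2_general F q hq hqodd g hg d hd hdvd hsmall β hβ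
end

section
/- Let α ∈ F_3 and β ∈ F∖{0}. Then the number of ordered pairs (d, d') ∈ D_{α,β} × D_{α,β} with d + d' = 0 equals #{x ∈ F∖{0} : Tr(x^{(q−1)/(2ℓ^m)}) = α and Tr(β·x) = 0}, and this common value equals (q − 3 + w(α,β) + w(α,2β) + w(α,0))/9. -/
open scoped Classical

noncomputable section

def zeta3 : ℂ := Complex.exp (2 * Real.pi * Complex.I / 3)

def chi (F : Type*) [Field F] [Fintype F] [Algebra (ZMod 3) F] (c : F) : ℂ :=
  zeta3 ^ (Algebra.trace (ZMod 3) F c).val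

def Ssum (F : Type*) [Field F] [Fintype F] [Algebra (ZMod 3) F] (N : ℕ) (a b : F) : ℂ :=
  ∑ x : Fˣ, chi F (a * (x : F) ^ ((Fintype.card F - 1) / N) + b * (x : F))

def wab (F : Type*) [Field F] [Fintype F] [Algebra (ZMod 3) F] (N : ℕ) (α : ZMod 3) (β : F) : ℂ :=
  zeta3 ^ (-α).val * Ssum F N 1 β + zeta3 ^ α.val * Ssum F N 2 (2 * β)

def Dset (F : Type*) [Field F] [Fintype F] [Algebra (ZMod 3) F] (N : ℕ) (α : ZMod 3) (β : F) : Set F :=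
  {x | x ≠ 0 ∧ Algebra.trace (ZMod 3) F (x ^ ((Fintype.card F - 1) / N) + β * x) = α}

def wtd (F : Type*) [Field F] [Fintype F] [Algebra (ZMod 3) F] (N : ℕ) (α : ZMod 3) (β γ : F) : ℕ :=
  Set.ncard {d ∈ Dset F N α β | Algebra.trace (ZMod 3) F (γ * d) ≠ 0}

def codeMap (F : Type*) [Field F] [Fintype F] [Algebra (ZMod 3) F] (N : ℕ) (α : ZMod 3) (β : F) :
    F → (↥(Dset F N α β) → ZMod 3) :=
  fun x d => Algebra.trace (ZMod 3) F ((d : F) * x)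

def sqrtq (F : Type*) [Fintype F] : ℝ := Real.sqrt (Fintype.card F)

def Ind {F : Type*} [Monoid F] (g x : F) : ℕ := sInf {k : ℕ | x = g ^ k}

def jmod {F : Type*} [Monoid F] (N : ℕ) (g x : F) : ℕ := ((-(Ind g x : ℤ)) % (N : ℤ)).toNat

def J1p1 (ℓ m j : ℕ) : Prop := 1 ≤ j ∧ j ≤ (ℓ - 1) * ℓ ^ (m - 1) ∧ ¬ ℓ ^ (m - 1) ∣ j
def J1p2 (ℓ m j : ℕ) : Prop := 1 ≤ j ∧ j ≤ (ℓ - 1) * ℓ ^ (m - 1) ∧ ℓ ^ (m - 1) ∣ j ∧ ¬ 2 ∣ j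
def J1p3 (ℓ m j : ℕ) : Prop := 1 ≤ j ∧ j ≤ (ℓ - 1) * ℓ ^ (m - 1) ∧ 2 * ℓ ^ (m - 1) ∣ j
def J2mem (ℓ m j : ℕ) : Prop := (ℓ - 1) * ℓ ^ (m - 1) < j ∧ j ≤ ℓ ^ m
def J3p1 (ℓ m j : ℕ) : Prop := (ℓ ^ m < j ∧ j ≤ 2 * ℓ ^ m - ℓ ^ (m - 1)) ∧ ¬ ℓ ^ (m - 1) ∣ j
def J3p2 (ℓ m j : ℕ) : Prop := ∃ k, 1 ≤ k ∧ k ≤ ℓ - 1 ∧ k % 2 = 0 ∧ j = ℓ ^ m + k * ℓ ^ (m - 1)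
def J3p3 (ℓ m j : ℕ) : Prop := ∃ k, 1 ≤ k ∧ k ≤ ℓ - 1 ∧ k % 2 = 1 ∧ j = ℓ ^ m + k * ℓ ^ (m - 1)
def J4mem (ℓ m j : ℕ) : Prop := 2 * ℓ ^ m - ℓ ^ (m - 1) < j ∧ j ≤ 2 * ℓ ^ m - 1
def Jp (ℓ m j : ℕ) : Prop := j = 0 ∨ J1p1 ℓ m j ∨ J2mem ℓ m j ∨ J3p1 ℓ m j ∨ J4mem ℓ m j
def Jpp (ℓ m j : ℕ) : Prop := J1p1 ℓ m j ∨ (J2mem ℓ m j ∧ j ≠ ℓ ^ m) ∨ J3p1 ℓ m j ∨ J4mem ℓ m j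

/-!
Since `n = (q - 1)/(2ℓ^m)` is even (Euler gives `ℓ^m ∣ 3^φ(2ℓ^m) - 1`, and `φ(2ℓ^m)` even gives
`4 ∣ 3^φ(2ℓ^m) - 1`), `(-x)^n = x^n`; so `x` and `-x` both lie in `D_{α,β}` iff
`Tr(x^n) + Tr(βx) = α = Tr(x^n) - Tr(βx)`, i.e. `Tr(x^n) = α` and `Tr(βx) = 0` in characteristic 3.
These `x` are counted by orthogonality of the characters of `𝔽₃`:
`9·[Tr(x^n) = α ∧ Tr(βx) = 0] = ∑_{u,v ∈ 𝔽₃} ζ^{u(Tr(x^n) - α) + v·Tr(βx)}`, and summing over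
`x ≠ 0` turns the right side into the nine sums `ζ^{-uα} S(u, vβ)`; the three with `u = 0` are
`q - 1, -1, -1`, and the other six group into `w(α,β) + w(α,2β) + w(α,0)`.
-/

theorem Nat.even_three_pow_totient_two_mul_sub_one_div {n : ℕ} (hodd : Odd n)
    (hcop : Nat.Coprime 3 n) (hn : 1 < n) :
    Even ((3 ^ (2 * n).totient - 1) / (2 * n)) := by
  have h2n : 2 * n ∣ 3 ^ (2 * n).totient - 1 :=
    (Nat.modEq_iff_dvd' (Nat.one_le_pow _ _ (by norm_num))).mp
      (Nat.ModEq.pow_totient (Nat.Coprime.mul_right (by norm_num) hcop)).symm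
  obtain ⟨k, hk⟩ := Nat.totient_even (by omega : 2 < 2 * n)
  have h4 : 4 ∣ 3 ^ (2 * n).totient - 1 := by
    rw [hk, ← two_mul, pow_mul]
    exact (by norm_num : 4 ∣ 9 - 1).trans (by simpa using Nat.sub_dvd_pow_sub_pow 9 1 k)
  have h4n : 4 * n ∣ 3 ^ (2 * n).totient - 1 :=
    (Nat.Coprime.pow_left 2 (Nat.coprime_two_left.mpr hodd)).mul_dvd_of_dvd_of_dvd h4
      ((dvd_mul_left n 2).trans h2n)
  exact even_iff_two_dvd.mpr (Nat.dvd_div_of_mul_dvd (by rwa [mul_right_comm]))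

lemma isPrimitiveRoot_zeta3 : IsPrimitiveRoot zeta3 3 := by
  simpa [zeta3] using Complex.isPrimitiveRoot_exp 3 (by norm_num)

def psi3 : AddChar (ZMod 3) ℂ := AddChar.zmodChar 3 isPrimitiveRoot_zeta3.pow_eq_one

lemma psi3_apply (t : ZMod 3) : psi3 t = zeta3 ^ t.val := rfl

lemma psi3_isPrimitive : psi3.IsPrimitive :=
  AddChar.zmodChar_primitive_of_primitive_root 3 isPrimitiveRoot_zeta3

lemma sum_psi3_mul (t : ZMod 3) : ∑ u, psi3 (u * t) = if t = 0 then 3 else 0 := by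
  simpa using AddChar.sum_mulShift t psi3_isPrimitive

lemma sum_sum_psi3_mul_eq_ite (a t s : ZMod 3) :
    ∑ u, ∑ v, psi3 (u * (t - a)) * psi3 (v * s) = if t = a ∧ s = 0 then 9 else 0 := by
  simp only [← Finset.sum_mul_sum, sum_psi3_mul, sub_eq_zero]
  split_ifs <;> simp_all
  norm_num

lemma ZMod.sum_univ_three {M : Type*} [AddCommMonoid M] (f : ZMod 3 → M) :
    ∑ u, f u = f 0 + f 1 + f 2 := by
  rw [show (Finset.univ : Finset (ZMod 3)) = {0, 1, 2} by decide,
    Finset.sum_insert (by decide), Finset.sum_insert (by decide), Finset.sum_singleton, add_assoc]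

lemma Fintype.sum_eq_add_sum_units {K M : Type*} [GroupWithZero K] [Fintype K] [DecidableEq K]
    [AddCommMonoid M] (f : K → M) : ∑ x, f x = f 0 + ∑ x : Kˣ, f x := by
  rw [Fintype.sum_eq_add_sum_compl 0 f]
  congr 1
  exact (Finset.sum_subtype _ (by simp) f).trans
    (Fintype.sum_equiv unitsEquivNeZero.symm _ _ fun _ => rfl)

lemma ncard_ne_zero_and_eq_card_units {K : Type*} [GroupWithZero K] [Fintype K] (P : K → Prop) :
    {x : K | x ≠ 0 ∧ P x}.ncard = (Finset.univ.filter fun x : Kˣ => P x).card := by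
  have himage : {x : K | x ≠ 0 ∧ P x} = Units.val '' {x : Kˣ | P x} := by
    ext x
    refine ⟨fun ⟨hx, hP⟩ => ⟨Units.mk0 x hx, hP, rfl⟩, ?_⟩
    rintro ⟨u, hu, rfl⟩
    exact ⟨u.ne_zero, hu⟩
  rw [himage, Set.ncard_image_of_injective _ Units.val_injective, Set.ncard_eq_toFinset_card',
    Set.toFinset_ofPred]

lemma three_eq_zero_of_char_three {R : Type*} [Semiring R] [Algebra (ZMod 3) R] : (3 : R) = 0 := by
  rw [← map_ofNat (algebraMap (ZMod 3) R) 3, show (3 : ZMod 3) = 0 by decide, map_zero]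

lemma two_ne_zero_of_char_three {R : Type*} [CommRing R] [Nontrivial R] [Algebra (ZMod 3) R] :
    (2 : R) ≠ 0 := fun h ↦
  one_ne_zero (by linear_combination three_eq_zero_of_char_three (R := R) - h)

section CharThree

variable {F : Type*} [Field F] [Algebra (ZMod 3) F]

local notation "Tr" => Algebra.trace (ZMod 3) F

lemma algebraMap_mul_trace (c : ZMod 3) (y : F) :
    c * Tr y = Tr (algebraMap (ZMod 3) F c * y) := by
  rw [← Algebra.smul_def, map_smul, smul_eq_mul]

variable [Fintype F]

lemma chi_eq_psi3_trace (c : F) : chi F c = psi3 (Tr c) := rfl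

lemma sum_units_chi_mul {b : F} (hb : b ≠ 0) : ∑ x : Fˣ, chi F (b * x) = -1 := by
  have : Module.Finite (ZMod 3) F := Module.Finite.of_finite
  obtain ⟨y, hy⟩ := Algebra.trace_surjective (ZMod 3) F 1
  have hprim : (psi3.compAddMonoidHom (Tr).toAddMonoidHom).IsPrimitive := by
    refine AddChar.IsPrimitive.of_ne_one (AddChar.ne_one_iff.mpr ⟨y, ?_⟩)
    rw [AddChar.compAddMonoidHom_apply, LinearMap.toAddMonoidHom_coe, hy,
      Ne, psi3_isPrimitive.zmod_char_eq_one_iff]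
    decide
  have hsum := AddChar.sum_mulShift b hprim
  rw [if_neg hb, Fintype.sum_eq_add_sum_units] at hsum
  simp only [zero_mul, AddChar.compAddMonoidHom_apply, LinearMap.toAddMonoidHom_coe,
    AddChar.map_zero_eq_one, Nat.cast_zero] at hsum
  simp only [chi_eq_psi3_trace, mul_comm b]
  linear_combination hsum

lemma Ssum_zero_zero (N : ℕ) : Ssum F N 0 0 = Fintype.card F - 1 := by
  simp [Ssum, chi, Fintype.card_units, Nat.cast_sub Fintype.card_pos]

lemma Ssum_zero_of_ne_zero (N : ℕ) {b : F} (hb : b ≠ 0) : Ssum F N 0 b = -1 := by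
  simpa [Ssum] using sum_units_chi_mul hb

lemma sum_units_psi3_mul_eq_Ssum (N : ℕ) (α u v : ZMod 3) (β : F) :
    ∑ x : Fˣ, psi3 (u * (Tr ((x : F) ^ ((Fintype.card F - 1) / N)) - α)) *
        psi3 (v * Tr (β * x)) =
      psi3 (-(u * α)) * Ssum F N (algebraMap (ZMod 3) F u) (algebraMap (ZMod 3) F v * β) := by
  rw [Ssum, Finset.mul_sum]
  refine Finset.sum_congr rfl fun x _ => ?_
  rw [chi_eq_psi3_trace, map_add, AddChar.map_add_eq_mul, mul_sub, sub_eq_neg_add,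
    AddChar.map_add_eq_mul, algebraMap_mul_trace, algebraMap_mul_trace, mul_assoc, mul_assoc]

lemma sum_sum_psi3_mul_Ssum (N : ℕ) (α : ZMod 3) {β : F} (hβ : β ≠ 0) :
    ∑ u, ∑ v, psi3 (-(u * α)) *
        Ssum F N (algebraMap (ZMod 3) F u) (algebraMap (ZMod 3) F v * β) =
      Fintype.card F - 3 + wab F N α β + wab F N α (2 * β) + wab F N α 0 := by
  have h2β : (2 : F) * β ≠ 0 := mul_ne_zero two_ne_zero_of_char_three hβ
  have h4β : (2 : F) * (2 * β) = β := by
    linear_combination β * three_eq_zero_of_char_three (R := F)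
  have h2α : -((2 : ZMod 3) * α) = α := by revert α; decide
  simp only [ZMod.sum_univ_three, map_zero, map_one, map_ofNat, zero_mul, one_mul, mul_zero,
    neg_zero, AddChar.map_zero_eq_one, Ssum_zero_zero, Ssum_zero_of_ne_zero _ hβ,
    Ssum_zero_of_ne_zero _ h2β, h2α, wab, h4β, ← psi3_apply]
  ring

theorem nine_mul_ncard_eq (N : ℕ) (α : ZMod 3) {β : F} (hβ : β ≠ 0) :
    9 * ({x : F | x ≠ 0 ∧ Tr (x ^ ((Fintype.card F - 1) / N)) = α ∧ Tr (β * x) = 0}.ncard : ℂ) =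
      Fintype.card F - 3 + wab F N α β + wab F N α (2 * β) + wab F N α 0 := by
  rw [ncard_ne_zero_and_eq_card_units, Finset.card_filter, Nat.cast_sum, Finset.mul_sum,
    ← sum_sum_psi3_mul_Ssum N α hβ]
  simp_rw [← sum_units_psi3_mul_eq_Ssum]
  calc
    _ = ∑ x : Fˣ, ∑ u, ∑ v, psi3 (u * (Tr ((x : F) ^ ((Fintype.card F - 1) / N)) - α)) *
          psi3 (v * Tr (β * x)) :=
      Finset.sum_congr rfl fun x _ ↦ by
        rw [sum_sum_psi3_mul_eq_ite]
        split_ifs <;> norm_num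
    _ = _ := by
      rw [Finset.sum_comm]
      exact Finset.sum_congr rfl fun u _ ↦ Finset.sum_comm

lemma mem_Dset_and_neg_mem_Dset_iff {N : ℕ} (hn : Even ((Fintype.card F - 1) / N))
    (α : ZMod 3) (β : F) {x : F} :
    x ∈ Dset F N α β ∧ -x ∈ Dset F N α β ↔
      x ≠ 0 ∧ Tr (x ^ ((Fintype.card F - 1) / N)) = α ∧ Tr (β * x) = 0 := by
  have hsolve : ∀ a b c : ZMod 3, a + b = c ∧ a - b = c ↔ a = c ∧ b = 0 := by decide
  simp only [Dset, Set.mem_ofPred_eq, neg_ne_zero, hn.neg_pow, mul_neg, map_add, map_neg,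
    ← sub_eq_add_neg, ← hsolve]
  tauto

theorem ncard_pairs_add_eq_zero {N : ℕ} (hn : Even ((Fintype.card F - 1) / N))
    (α : ZMod 3) (β : F) :
    {dd : F × F | dd.1 ∈ Dset F N α β ∧ dd.2 ∈ Dset F N α β ∧ dd.1 + dd.2 = 0}.ncard =
      {x : F | x ≠ 0 ∧ Tr (x ^ ((Fintype.card F - 1) / N)) = α ∧ Tr (β * x) = 0}.ncard := by
  have himage : {dd : F × F | dd.1 ∈ Dset F N α β ∧ dd.2 ∈ Dset F N α β ∧ dd.1 + dd.2 = 0} =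
      (fun x ↦ (x, -x)) '' {x : F | x ∈ Dset F N α β ∧ -x ∈ Dset F N α β} := by
    ext ⟨d, d'⟩
    simp only [Set.mem_ofPred_eq, Set.mem_image, Prod.mk.injEq]
    constructor
    · rintro ⟨hd, hd', hsum⟩
      obtain rfl := eq_neg_of_add_eq_zero_right hsum
      exact ⟨d, ⟨hd, hd'⟩, rfl, rfl⟩
    · rintro ⟨x, ⟨hx, hx'⟩, rfl, rfl⟩
      exact ⟨hx, hx', add_neg_cancel x⟩
  rw [himage, Set.ncard_image_of_injective _ fun _ _ h ↦ congrArg Prod.fst h]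
  simp only [mem_Dset_and_neg_mem_Dset_iff hn]

end CharThree

theorem statement_8_general (ℓ m : ℕ) (hℓ : ℓ.Prime) (hℓ3 : 3 < ℓ) (hm : 0 < m)
    (F : Type*) [Field F] [Fintype F] [Algebra (ZMod 3) F]
    (hq : Fintype.card F = 3 ^ (2 * ℓ ^ m).totient)
    (α : ZMod 3) (β : F) (hβ : β ≠ 0) :
    Set.ncard {dd : F × F |
        dd.1 ∈ Dset F (2 * ℓ ^ m) α β ∧ dd.2 ∈ Dset F (2 * ℓ ^ m) α β ∧ dd.1 + dd.2 = 0} =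
      Set.ncard {x : F | x ≠ 0 ∧
        Algebra.trace (ZMod 3) F (x ^ ((Fintype.card F - 1) / (2 * ℓ ^ m))) = α ∧
        Algebra.trace (ZMod 3) F (β * x) = 0} ∧
    ((Set.ncard {dd : F × F |
        dd.1 ∈ Dset F (2 * ℓ ^ m) α β ∧ dd.2 ∈ Dset F (2 * ℓ ^ m) α β ∧ dd.1 + dd.2 = 0} : ℂ)) =
      ((Fintype.card F : ℂ) - 3 + wab F (2 * ℓ ^ m) α β + wab F (2 * ℓ ^ m) α (2 * β) +
        wab F (2 * ℓ ^ m) α 0) / 9 := by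
  have hn : Even ((Fintype.card F - 1) / (2 * ℓ ^ m)) := by
    rw [hq]
    exact Nat.even_three_pow_totient_two_mul_sub_one_div ((hℓ.odd_of_ne_two (by omega)).pow)
      (Nat.Coprime.pow_right m ((Nat.coprime_primes Nat.prime_three hℓ).mpr (by omega)))
      (Nat.one_lt_pow hm.ne' hℓ.one_lt)
  have hpairs := ncard_pairs_add_eq_zero hn α β
  refine ⟨hpairs, ?_⟩
  rw [hpairs, eq_div_iff (by norm_num), mul_comm]
  exact nine_mul_ncard_eq _ α hβ

/-- The number of ordered pairs `(d,d') ∈ D² with d + d' = 0` equals the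
number of `x ≠ 0` with `Tr(x^{(q−1)/(2ℓ^m)}) = α` and `Tr(βx) = 0`, and this common value
is `(q − 3 + w(α,β) + w(α,2β) + w(α,0))/9`. -/
theorem statement_8 (ℓ m : ℕ) (hℓ : ℓ.Prime) (hℓ3 : 3 < ℓ) (hm : 0 < m)
    (hprim : orderOf ((3 : ZMod (2 * ℓ ^ m))) = (2 * ℓ ^ m).totient)
    (F : Type*) [Field F] [Fintype F] [Algebra (ZMod 3) F]
    (hq : Fintype.card F = 3 ^ (2 * ℓ ^ m).totient)
    (α : ZMod 3) (β : F) (hβ : β ≠ 0) :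
    Set.ncard {dd : F × F |
        dd.1 ∈ Dset F (2 * ℓ ^ m) α β ∧ dd.2 ∈ Dset F (2 * ℓ ^ m) α β ∧ dd.1 + dd.2 = 0} =
      Set.ncard {x : F | x ≠ 0 ∧
        Algebra.trace (ZMod 3) F (x ^ ((Fintype.card F - 1) / (2 * ℓ ^ m))) = α ∧
        Algebra.trace (ZMod 3) F (β * x) = 0} ∧
    ((Set.ncard {dd : F × F |
        dd.1 ∈ Dset F (2 * ℓ ^ m) α β ∧ dd.2 ∈ Dset F (2 * ℓ ^ m) α β ∧ dd.1 + dd.2 = 0} : ℂ)) =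
      ((Fintype.card F : ℂ) - 3 + wab F (2 * ℓ ^ m) α β + wab F (2 * ℓ ^ m) α (2 * β) +
        wab F (2 * ℓ ^ m) α 0) / 9 :=
  statement_8_general ℓ m hℓ hℓ3 hm F hq α β hβ
end
end

section
/- For x ∈ F∖{0}, write Tr₁ = Tr(x^{(q−1)/ℓ^m}) ∈ F_3 and Tr₂ = Tr(x^{(q−1)/(2ℓ^m)}) ∈ F_3. If ℓ ≡ 1 (mod 3), then Tr₁ = 0 for x ∈ F₁ ∪ F₂ ∪ F₃ ∪ F₆ and Tr₁ = −1 for x ∈ F₄ ∪ F₅; and Tr₂ = 0 for x ∈ F₁ ∪ F₃ ∪ F₆, Tr₂ = 1 for x ∈ F₂ ∪ F₅, and Tr₂ = −1 for x ∈ F₄. If ℓ ≡ 2 (mod 3), then Tr₁ = (−1)^{m−1} for x ∈ F₁ ∪ F₂ ∪ F₃, Tr₁ = (−1)^m for x ∈ F₄ ∪ F₅, and Tr₁ = 0 for x ∈ F₆; and Tr₂ = (−1)^{m−1} for x ∈ F₁ ∪ F₅, Tr₂ = (−1)^m for x ∈ F₃ ∪ F₄, and Tr₂ = 0 for x ∈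 F₂ ∪ F₆ (all values (−1)^k taken in F_3). -/
open scoped Classical

noncomputable section

def memF1 {F : Type*} [Monoid F] (k2 k1 k2' k1' : ℕ) (x : F) : Prop := x ^ k2 = 1
def memF2 {F : Type*} [Monoid F] (k2 k1 k2' k1' : ℕ) (x : F) : Prop :=
  x ^ k2 ≠ 1 ∧ x ^ k1 = 1 ∧ x ^ k2' = 1
def memF3 {F : Type*} [Monoid F] (k2 k1 k2' k1' : ℕ) (x : F) : Prop :=
  x ^ k2 ≠ 1 ∧ x ^ k1 = 1 ∧ x ^ k2' ≠ 1
def memF4 {F : Type*} [Monoid F] (k2 k1 k2' k1' : ℕ) (x : F) : Prop :=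
  x ^ k2 ≠ 1 ∧ x ^ k1 ≠ 1 ∧ x ^ k2' = 1 ∧ x ^ k1' = 1
def memF5 {F : Type*} [Monoid F] (k2 k1 k2' k1' : ℕ) (x : F) : Prop :=
  x ^ k2 ≠ 1 ∧ x ^ k1 ≠ 1 ∧ x ^ k2' ≠ 1 ∧ x ^ k1' = 1
def memF6 {F : Type*} [Monoid F] (k2 k1 k2' k1' : ℕ) (x : F) : Prop :=
  x ^ k2 ≠ 1 ∧ x ^ k1 ≠ 1 ∧ x ^ k2' ≠ 1 ∧ x ^ k1' ≠ 1

/-!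
Put `y = x^{(q-1)/(2ℓ^m)}`: the four powers of `x` in the statement are `y, y², y^ℓ, y^{2ℓ}`,
and `y^{2ℓ^m} = 1`. The sets `F₁, …, F₆` are read off the order `d` of `y` (`F₂` is empty as `ℓ`
is odd): `d = 1, 2, ℓ, 2ℓ`, or `ℓ² ∣ d`. For `d ∣ 2ℓ^m` the residue of `3` still generates
`(ℤ/d)ˣ`, so the Frobenius orbit `ζ, ζ³, ζ⁹, …` of a primitive `d`-th root of unity `ζ` runs
`e/φ(d)` times through all primitive `d`-th roots, whose sum is `μ(d)` by Möbius inversion of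
`∑_{d ∣ n} (sum of primitive d-th roots) = [n = 1]`. Hence `Tr ζ = (e/φ(d)) μ(d)`, and it remains
to evaluate this for the five kinds of `d` and to reduce `ℓ` modulo `3`.
-/

open Finset Polynomial
open scoped ArithmeticFunction.Moebius Nat

theorem Function.Periodic.sum_range_mul {M : Type*} [AddCommMonoid M] {f : ℕ → M} {t : ℕ}
    (hf : Function.Periodic f t) (c : ℕ) :
    ∑ i ∈ range (t * c), f i = c • ∑ i ∈ range t, f i := by
  induction c with
  | zero => simp
  | succ c ih =>
    rw [Nat.mul_succ, sum_range_add, ih, succ_nsmul]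
    congr 1
    refine sum_congr rfl fun i _ => ?_
    rw [add_comm, mul_comm]
    exact (hf.nat_mul c) i

namespace IsPrimitiveRoot

section CommMonoid

variable {M : Type*} [CommMonoid M] {ζ : M} {n : ℕ}

theorem pow_pow_eq_pow_pow_iff (hζ : IsPrimitiveRoot ζ n) (hn : 0 < n) (a i j : ℕ) :
    ζ ^ a ^ i = ζ ^ a ^ j ↔ (a : ZMod n) ^ i = (a : ZMod n) ^ j := by
  rw [(orderOf_pos_iff.1 (hζ.eq_orderOf ▸ hn)).pow_eq_pow_iff_modEq, ← hζ.eq_orderOf,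
    ← ZMod.natCast_eq_natCast_iff, Nat.cast_pow, Nat.cast_pow]

theorem injOn_pow_pow (hζ : IsPrimitiveRoot ζ n) (hn : 0 < n) (a : ℕ) :
    Set.InjOn (fun i => ζ ^ a ^ i) (range (orderOf (a : ZMod n))) := fun i hi j hj h =>
  pow_injOn_Iio_orderOf (mem_range.1 hi) (mem_range.1 hj) ((hζ.pow_pow_eq_pow_pow_iff hn a i j).1 h)

end CommMonoid

section IsDomain

variable {R : Type*} [CommRing R] [IsDomain R] {ζ : R} {n : ℕ}

theorem nthRootsFinset_eq_image [DecidableEq R] (hζ : IsPrimitiveRoot ζ n) :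
    nthRootsFinset n (1 : R) = (range n).image (ζ ^ ·) := by
  refine (eq_of_subset_of_card_le ?_ ?_).symm
  · intro η hη
    obtain ⟨i, hi, rfl⟩ := mem_image.1 hη
    rw [Polynomial.mem_nthRootsFinset (Nat.zero_lt_of_lt (mem_range.1 hi)) 1, ← pow_mul,
      mul_comm, pow_mul, hζ.pow_eq_one, one_pow]
  · rw [card_image_of_injOn fun i hi j hj h => hζ.pow_inj (mem_range.1 hi) (mem_range.1 hj) h,
      card_range, hζ.card_nthRootsFinset]

theorem sum_nthRootsFinset [DecidableEq R] (hζ : IsPrimitiveRoot ζ n) :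
    ∑ η ∈ nthRootsFinset n (1 : R), η = if n = 1 then 1 else 0 := by
  rw [hζ.nthRootsFinset_eq_image,
    sum_image fun i hi j hj h => hζ.pow_inj (mem_range.1 hi) (mem_range.1 hj) h]
  rcases Nat.lt_trichotomy n 1 with h | rfl | h
  · simp [Nat.lt_one_iff.1 h]
  · simp
  · rw [if_neg h.ne', hζ.geom_sum_eq_zero h]

theorem sum_primitiveRoots_eq_moebius (hζ : IsPrimitiveRoot ζ n) (hn : 0 < n) :
    ∑ η ∈ primitiveRoots n R, η = μ n := by
  have hdiv : ∀ d > 0, d ∈ {d | d ∣ n} →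
      ∑ i ∈ d.divisors, ∑ η ∈ primitiveRoots i R, η = if d = 1 then (1 : R) else 0 := by
    intro d hd hdn
    rw [← sum_biUnion (fun i _ j _ hij => IsPrimitiveRoot.disjoint hij),
      ← nthRoots_one_eq_biUnion_primitiveRoots]
    have := hζ.pow_of_dvd (Nat.div_pos (Nat.le_of_dvd hn hdn) hd).ne' (Nat.div_dvd_of_dvd hdn)
    rw [Nat.div_div_self hdn hn.ne'] at this
    exact this.sum_nthRootsFinset
  have key := (ArithmeticFunction.sum_eq_iff_sum_mul_moebius_eq_on {d | d ∣ n}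
    fun _ _ h h' => h.trans h').1 hdiv n hn dvd_rfl
  rw [← key, Nat.sum_divisorsAntidiagonal (fun a b => (μ a : R) * if b = 1 then 1 else 0),
    sum_eq_single n]
  · simp [Nat.div_self hn]
  · intro b hb hbn
    rw [if_neg fun h => hbn (Nat.eq_of_dvd_of_div_eq_one (Nat.dvd_of_mem_divisors hb) h), mul_zero]
  · simp [hn.ne']

theorem image_pow_pow_eq_primitiveRoots [DecidableEq R] (hζ : IsPrimitiveRoot ζ n)
    (hn : 0 < n) {a : ℕ} (ha : orderOf (a : ZMod n) = φ n) :
    (range (φ n)).image (fun i => ζ ^ a ^ i) = primitiveRoots n R := by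
  have hcop : a.Coprime n := by
    rw [← ZMod.isUnit_iff_coprime]
    exact (orderOf_pos_iff.1 (ha ▸ Nat.totient_pos.2 hn)).isUnit
  refine eq_of_subset_of_card_le (fun η hη => ?_) ?_
  · obtain ⟨i, -, rfl⟩ := mem_image.1 hη
    exact (mem_primitiveRoots hn).2 (hζ.pow_of_coprime _ (hcop.pow_left i))
  · rw [hζ.card_primitiveRoots, card_image_of_injOn (ha ▸ hζ.injOn_pow_pow hn a), card_range]

end IsDomain

end IsPrimitiveRoot

theorem FiniteField.trace_eq_of_isPrimitiveRoot {K L : Type*} [Field K] [Finite K] [Field L]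
    [Finite L] [Algebra K L] {ζ : L} {d : ℕ} (hζ : IsPrimitiveRoot ζ d) (hd : 0 < d)
    (hK : orderOf (Nat.card K : ZMod d) = φ d) :
    Algebra.trace K L ζ = ((Module.finrank K L / φ d : ℕ) : K) * μ d := by
  have := Fintype.ofFinite L
  set Q := Nat.card K
  have hg : Function.Periodic (fun i => ζ ^ Q ^ i) (φ d) := fun i => by
    rw [hζ.pow_pow_eq_pow_pow_iff hd, pow_add, ← hK, pow_orderOf_eq_one, mul_one]
  obtain ⟨c, hc⟩ : φ d ∣ Module.finrank K L := by
    rw [← hK]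
    refine orderOf_dvd_of_pow_eq_one ?_
    rw [← pow_zero (Q : ZMod d), ← hζ.pow_pow_eq_pow_pow_iff hd, pow_zero, pow_one,
      ← Module.natCard_eq_pow_finrank, ← Fintype.card_eq_nat_card, FiniteField.pow_card]
  apply (algebraMap K L).injective
  rw [FiniteField.algebraMap_trace_eq_sum_pow, hc, hg.sum_range_mul,
    Nat.mul_div_cancel_left c (Nat.totient_pos.2 hd), map_mul, map_natCast, map_intCast,
    ← hζ.sum_primitiveRoots_eq_moebius hd, ← hζ.image_pow_pow_eq_primitiveRoots hd hK,
    sum_image (hK ▸ hζ.injOn_pow_pow hd Q), nsmul_eq_mul]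

theorem ZMod.orderOf_natCast_eq_totient_of_dvd {a n d : ℕ} [NeZero n] (hdn : d ∣ n)
    (ha : orderOf (a : ZMod n) = φ n) : orderOf (a : ZMod d) = φ d := by
  have : NeZero d := ⟨by rintro rfl; exact NeZero.ne n (zero_dvd_iff.1 hdn)⟩
  have hu : IsUnit (a : ZMod n) :=
    (orderOf_pos_iff.1 (ha ▸ Nat.totient_pos.2 (NeZero.pos n))).isUnit
  have htop : Subgroup.zpowers hu.unit = ⊤ := Subgroup.eq_top_of_card_eq _ <| by
    rw [Nat.card_zpowers, ← orderOf_units, hu.unit_spec, ha, Nat.card_eq_fintype_card,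
      ZMod.card_units_eq_totient]
  have hmap : (ZMod.unitsMap hdn hu.unit : ZMod d) = a := by
    simp [ZMod.unitsMap]
  rw [← hmap, orderOf_units, orderOf_eq_card_of_forall_mem_zpowers, Nat.card_eq_fintype_card,
    ZMod.card_units_eq_totient]
  intro x
  obtain ⟨y, rfl⟩ := ZMod.unitsMap_surjective hdn x
  obtain ⟨k, rfl⟩ := Subgroup.mem_zpowers_iff.1 (htop ▸ Subgroup.mem_top y)
  exact ⟨k, (map_zpow _ _ _).symm⟩

theorem dvd_pow_totient_sub_one {a n : ℕ} (ha : orderOf (a : ZMod n) = φ n) :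
    n ∣ a ^ φ n - 1 := by
  rcases Nat.eq_zero_or_pos (a ^ φ n) with h | h
  · simp [h]
  rw [← ZMod.natCast_eq_zero_iff, Nat.cast_sub h, Nat.cast_pow, Nat.cast_one, sub_eq_zero, ← ha,
    pow_orderOf_eq_one]

theorem FiniteField.trace_eq_of_pow_eq_one {p n : ℕ} [Fact p.Prime] [NeZero n] {F : Type*}
    [Field F] [Fintype F] [Algebra (ZMod p) F] (hp : orderOf (p : ZMod n) = φ n)
    (hq : Fintype.card F = p ^ φ n) {z : F} (hz : z ^ n = 1) :
    Algebra.trace (ZMod p) F z = ((φ n / φ (orderOf z) : ℕ) : ZMod p) * μ (orderOf z) := by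
  have hdn : orderOf z ∣ n := orderOf_dvd_of_pow_eq_one hz
  have hrank : Module.finrank (ZMod p) F = φ n := by
    refine Nat.pow_right_injective (Fact.out : p.Prime).two_le ?_
    show p ^ _ = p ^ _
    rw [← hq, Module.card_eq_pow_finrank (K := ZMod p), ZMod.card]
  rw [← hrank]
  refine FiniteField.trace_eq_of_isPrimitiveRoot (IsPrimitiveRoot.orderOf z)
    (Nat.pos_of_dvd_of_pos hdn (NeZero.pos n)) ?_
  rw [Nat.card_zmod]
  exact ZMod.orderOf_natCast_eq_totient_of_dvd hdn hp

theorem pow_div_eq_pow_div_mul_pow {M : Type*} [Monoid M] (x : M) {a b c N : ℕ} (hc : a * b = c)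
    (h : c ∣ N) : x ^ (N / b) = (x ^ (N / c)) ^ a := by
  subst hc
  rw [← pow_mul, mul_comm a b, ← Nat.div_div_eq_div_mul,
    Nat.div_mul_cancel (Nat.dvd_div_of_mul_dvd (mul_comm a b ▸ h))]

theorem pow_div_two_mul_pow_succ {M : Type*} [Monoid M] (x : M) {ℓ m N : ℕ}
    (h : 2 * ℓ ^ (m + 1) ∣ N) :
    x ^ (N / ℓ ^ (m + 1)) = (x ^ (N / (2 * ℓ ^ (m + 1)))) ^ 2 ∧
      x ^ (N / (2 * ℓ ^ m)) = (x ^ (N / (2 * ℓ ^ (m + 1)))) ^ ℓ ∧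
      x ^ (N / ℓ ^ m) = (x ^ (N / (2 * ℓ ^ (m + 1)))) ^ (2 * ℓ) :=
  ⟨pow_div_eq_pow_div_mul_pow x rfl h, pow_div_eq_pow_div_mul_pow x (by ring) h,
    pow_div_eq_pow_div_mul_pow x (by ring) h⟩

section OddPrime

variable {ℓ : ℕ}

theorem totient_two_mul_pow_succ (hℓ : ℓ.Prime) (hℓ2 : ℓ ≠ 2) (m : ℕ) :
    φ (2 * ℓ ^ (m + 1)) = ℓ ^ m * (ℓ - 1) := by
  rw [Nat.totient_mul (((Nat.coprime_primes Nat.prime_two hℓ).2 hℓ2.symm).pow_right _),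
    Nat.totient_two, Nat.totient_prime_pow_succ hℓ, one_mul]

theorem orderOf_eq_two_mul_of_pow_eq_one {M : Type*} [Monoid M] {y : M} (hℓ : ℓ.Prime)
    (hy : y ^ (2 * ℓ) = 1) (h2 : y ^ 2 ≠ 1) (hℓ1 : y ^ ℓ ≠ 1) : orderOf y = 2 * ℓ := by
  obtain ⟨a, b, ha, hb, hab⟩ := Nat.dvd_mul.1 (orderOf_dvd_of_pow_eq_one hy)
  rcases (Nat.dvd_prime hℓ).1 hb with rfl | rfl
  · exact absurd (orderOf_dvd_iff_pow_eq_one.1 (by rwa [← hab, mul_one])) h2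
  rcases (Nat.dvd_prime Nat.prime_two).1 ha with rfl | rfl
  · exact absurd (orderOf_dvd_iff_pow_eq_one.1 (by rw [← hab, one_mul])) hℓ1
  · exact hab.symm

theorem sq_dvd_orderOf_sq {M : Type*} [Monoid M] {y : M} (hℓ : ℓ.Prime) {m : ℕ}
    (hy : y ^ (2 * ℓ ^ m) = 1) (h : y ^ (2 * ℓ) ≠ 1) : ℓ ^ 2 ∣ orderOf (y ^ 2) := by
  obtain ⟨j, -, hj⟩ := (Nat.dvd_prime_pow hℓ).1 (orderOf_dvd_of_pow_eq_one (x := y ^ 2)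
    (by rwa [← pow_mul]))
  rw [hj]
  refine pow_dvd_pow ℓ (not_lt.1 fun hj1 => h ?_)
  rw [pow_mul, ← orderOf_dvd_iff_pow_eq_one, hj]
  exact (pow_dvd_pow ℓ (Nat.lt_succ_iff.1 hj1)).trans (pow_one ℓ).dvd

variable {R : Type*} [CommRing R]

theorem totient_div_mul_moebius_one (hℓ : ℓ.Prime) (hℓ2 : ℓ ≠ 2) (m : ℕ) :
    ((φ (2 * ℓ ^ (m + 1)) / φ 1 : ℕ) : R) * μ 1 = ℓ ^ m * (ℓ - 1) := by
  simp [totient_two_mul_pow_succ hℓ hℓ2, Nat.cast_sub hℓ.one_le]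

theorem totient_div_mul_moebius_two (hℓ : ℓ.Prime) (hℓ2 : ℓ ≠ 2) (m : ℕ) :
    ((φ (2 * ℓ ^ (m + 1)) / φ 2 : ℕ) : R) * μ 2 = -(ℓ ^ m * (ℓ - 1)) := by
  simp [totient_two_mul_pow_succ hℓ hℓ2, Nat.cast_sub hℓ.one_le,
    ArithmeticFunction.moebius_apply_prime Nat.prime_two]

theorem totient_div_mul_moebius_prime (hℓ : ℓ.Prime) (hℓ2 : ℓ ≠ 2) (m : ℕ) :
    ((φ (2 * ℓ ^ (m + 1)) / φ ℓ : ℕ) : R) * μ ℓ = -ℓ ^ m := by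
  rw [totient_two_mul_pow_succ hℓ hℓ2, Nat.totient_prime hℓ,
    Nat.mul_div_cancel _ (Nat.sub_pos_of_lt hℓ.one_lt), ArithmeticFunction.moebius_apply_prime hℓ]
  push_cast
  ring

theorem totient_div_mul_moebius_two_mul_prime (hℓ : ℓ.Prime) (hℓ2 : ℓ ≠ 2) (m : ℕ) :
    ((φ (2 * ℓ ^ (m + 1)) / φ (2 * ℓ) : ℕ) : R) * μ (2 * ℓ) = ℓ ^ m := by
  have h2ℓ := totient_two_mul_pow_succ hℓ hℓ2 0
  rw [zero_add, pow_one, pow_zero, one_mul] at h2ℓ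
  rw [totient_two_mul_pow_succ hℓ hℓ2, h2ℓ, Nat.mul_div_cancel _ (Nat.sub_pos_of_lt hℓ.one_lt),
    ArithmeticFunction.isMultiplicative_moebius.map_mul_of_coprime
      ((Nat.coprime_primes Nat.prime_two hℓ).2 hℓ2.symm),
    ArithmeticFunction.moebius_apply_prime hℓ, ArithmeticFunction.moebius_apply_prime Nat.prime_two]
  push_cast
  ring

theorem moebius_eq_zero_of_sq_dvd (hℓ : ℓ.Prime) {d : ℕ} (hd : ℓ ^ 2 ∣ d) : μ d = 0 :=
  ArithmeticFunction.moebius_eq_zero_of_not_squarefree fun h =>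
    hℓ.one_lt.ne' (Nat.isUnit_iff.1 (h ℓ (by rwa [← sq])))

end OddPrime

theorem traces_by_region {ℓ m : ℕ} (hℓ : ℓ.Prime) (hℓ2 : ℓ ≠ 2) {F : Type*} [Field F]
    [Fintype F] [Algebra (ZMod 3) F]
    (hprim : orderOf ((3 : ℕ) : ZMod (2 * ℓ ^ (m + 1))) = φ (2 * ℓ ^ (m + 1)))
    (hq : Fintype.card F = 3 ^ φ (2 * ℓ ^ (m + 1))) {y : F} (hy : y ^ (2 * ℓ ^ (m + 1)) = 1) :
    (y = 1 ∧ Algebra.trace (ZMod 3) F (y ^ 2) = ℓ ^ m * (ℓ - 1) ∧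
        Algebra.trace (ZMod 3) F y = ℓ ^ m * (ℓ - 1)) ∨
      (y ≠ 1 ∧ y ^ 2 = 1 ∧ y ^ ℓ ≠ 1 ∧ y ^ (2 * ℓ) = 1 ∧
        Algebra.trace (ZMod 3) F (y ^ 2) = ℓ ^ m * (ℓ - 1) ∧
        Algebra.trace (ZMod 3) F y = -(ℓ ^ m * (ℓ - 1))) ∨
      (y ≠ 1 ∧ y ^ 2 ≠ 1 ∧ y ^ ℓ = 1 ∧ y ^ (2 * ℓ) = 1 ∧
        Algebra.trace (ZMod 3) F (y ^ 2) = -ℓ ^ m ∧ Algebra.trace (ZMod 3) F y = -ℓ ^ m) ∨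
      (y ≠ 1 ∧ y ^ 2 ≠ 1 ∧ y ^ ℓ ≠ 1 ∧ y ^ (2 * ℓ) = 1 ∧
        Algebra.trace (ZMod 3) F (y ^ 2) = -ℓ ^ m ∧ Algebra.trace (ZMod 3) F y = ℓ ^ m) ∨
      (y ≠ 1 ∧ y ^ 2 ≠ 1 ∧ y ^ ℓ ≠ 1 ∧ y ^ (2 * ℓ) ≠ 1 ∧
        Algebra.trace (ZMod 3) F (y ^ 2) = 0 ∧ Algebra.trace (ZMod 3) F y = 0) := by
  have : NeZero (2 * ℓ ^ (m + 1)) := ⟨by have := hℓ.pos; positivity⟩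
  have : Fact ℓ.Prime := ⟨hℓ⟩
  have hy2 : (y ^ 2) ^ (2 * ℓ ^ (m + 1)) = 1 := by rw [← pow_mul, mul_comm, pow_mul, hy, one_pow]
  rw [FiniteField.trace_eq_of_pow_eq_one hprim hq hy,
    FiniteField.trace_eq_of_pow_eq_one hprim hq hy2]
  by_cases hA : y = 1
  · subst hA
    rw [one_pow, orderOf_one]
    exact Or.inl ⟨rfl, totient_div_mul_moebius_one hℓ hℓ2 m, totient_div_mul_moebius_one hℓ hℓ2 m⟩
  by_cases hB : y ^ 2 = 1
  · have hC : y ^ ℓ ≠ 1 := fun hC => hA <| by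
      simpa [Nat.coprime_primes Nat.prime_two hℓ |>.2 hℓ2.symm] using pow_gcd_eq_one.2 ⟨hB, hC⟩
    rw [orderOf_eq_one_iff.2 hB, orderOf_eq_prime hB hA]
    exact Or.inr <| Or.inl ⟨hA, hB, hC, by rw [pow_mul, hB, one_pow],
      totient_div_mul_moebius_one hℓ hℓ2 m, totient_div_mul_moebius_two hℓ hℓ2 m⟩
  by_cases hC : y ^ ℓ = 1
  · rw [orderOf_eq_prime hC hA,
      orderOf_eq_prime (by rw [← pow_mul, mul_comm, pow_mul, hC, one_pow]) hB]
    exact Or.inr <| Or.inr <| Or.inl ⟨hA, hB, hC, by rw [mul_comm, pow_mul, hC, one_pow],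
      totient_div_mul_moebius_prime hℓ hℓ2 m, totient_div_mul_moebius_prime hℓ hℓ2 m⟩
  by_cases hD : y ^ (2 * ℓ) = 1
  · rw [orderOf_eq_two_mul_of_pow_eq_one hℓ hD hB hC, orderOf_eq_prime (by rwa [← pow_mul]) hB]
    exact Or.inr <| Or.inr <| Or.inr <| Or.inl ⟨hA, hB, hC, hD,
      totient_div_mul_moebius_prime hℓ hℓ2 m, totient_div_mul_moebius_two_mul_prime hℓ hℓ2 m⟩
  have hsq := sq_dvd_orderOf_sq hℓ hy hD
  rw [moebius_eq_zero_of_sq_dvd hℓ hsq,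
    moebius_eq_zero_of_sq_dvd hℓ (hsq.trans (orderOf_pow_dvd 2))]
  simp [hA, hB, hC, hD]

/-- Proposition 4.3 of the paper: the traces of `x^{(q−1)/ℓ^m}` and
`x^{(q−1)/(2ℓ^m)}` according to the partition `F₁,…,F₆` of `F∖{0}`. -/
theorem statement_18 (ℓ m : ℕ) (hℓ : ℓ.Prime) (hℓ3 : 3 < ℓ) (hm : 0 < m)
    (hprim : orderOf ((3 : ZMod (2 * ℓ ^ m))) = (2 * ℓ ^ m).totient)
    (F : Type*) [Field F] [Fintype F] [Algebra (ZMod 3) F]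
    (hq : Fintype.card F = 3 ^ (2 * ℓ ^ m).totient)
    (k2 k1 k2' k1' : ℕ)
    (hk2 : k2 = (Fintype.card F - 1) / (2 * ℓ ^ m))
    (hk1 : k1 = (Fintype.card F - 1) / ℓ ^ m)
    (hk2' : k2' = (Fintype.card F - 1) / (2 * ℓ ^ (m - 1)))
    (hk1' : k1' = (Fintype.card F - 1) / ℓ ^ (m - 1))
    (x : F) (hx : x ≠ 0) :
    (ℓ % 3 = 1 →
      ((memF1 k2 k1 k2' k1' x ∨ memF2 k2 k1 k2' k1' x ∨ memF3 k2 k1 k2' k1' x ∨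
          memF6 k2 k1 k2' k1' x) → Algebra.trace (ZMod 3) F (x ^ k1) = 0) ∧
      ((memF4 k2 k1 k2' k1' x ∨ memF5 k2 k1 k2' k1' x) →
          Algebra.trace (ZMod 3) F (x ^ k1) = -1) ∧
      ((memF1 k2 k1 k2' k1' x ∨ memF3 k2 k1 k2' k1' x ∨ memF6 k2 k1 k2' k1' x) →
          Algebra.trace (ZMod 3) F (x ^ k2) = 0) ∧
      ((memF2 k2 k1 k2' k1' x ∨ memF5 k2 k1 k2' k1' x) →
          Algebra.trace (ZMod 3) F (x ^ k2) = 1) ∧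
      (memF4 k2 k1 k2' k1' x → Algebra.trace (ZMod 3) F (x ^ k2) = -1)) ∧
    (ℓ % 3 = 2 →
      ((memF1 k2 k1 k2' k1' x ∨ memF2 k2 k1 k2' k1' x ∨ memF3 k2 k1 k2' k1' x) →
          Algebra.trace (ZMod 3) F (x ^ k1) = (-1 : ZMod 3) ^ (m - 1)) ∧
      ((memF4 k2 k1 k2' k1' x ∨ memF5 k2 k1 k2' k1' x) →
          Algebra.trace (ZMod 3) F (x ^ k1) = (-1 : ZMod 3) ^ m) ∧
      (memF6 k2 k1 k2' k1' x → Algebra.trace (ZMod 3) F (x ^ k1) = 0) ∧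
      ((memF1 k2 k1 k2' k1' x ∨ memF5 k2 k1 k2' k1' x) →
          Algebra.trace (ZMod 3) F (x ^ k2) = (-1 : ZMod 3) ^ (m - 1)) ∧
      ((memF3 k2 k1 k2' k1' x ∨ memF4 k2 k1 k2' k1' x) →
          Algebra.trace (ZMod 3) F (x ^ k2) = (-1 : ZMod 3) ^ m) ∧
      ((memF2 k2 k1 k2' k1' x ∨ memF6 k2 k1 k2' k1' x) →
          Algebra.trace (ZMod 3) F (x ^ k2) = 0)) := by
  obtain ⟨m, rfl⟩ : ∃ k, m = k + 1 := ⟨m - 1, by omega⟩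
  have hprim' : orderOf ((3 : ℕ) : ZMod (2 * ℓ ^ (m + 1))) = φ (2 * ℓ ^ (m + 1)) := by
    exact_mod_cast hprim
  have hdvd : 2 * ℓ ^ (m + 1) ∣ Fintype.card F - 1 := hq ▸ dvd_pow_totient_sub_one hprim'
  have hy : (x ^ k2) ^ (2 * ℓ ^ (m + 1)) = 1 := by
    rw [← pow_mul, hk2, Nat.div_mul_cancel hdvd, FiniteField.pow_card_sub_one_eq_one x hx]
  obtain ⟨hk1x, hk2'x, hk1'x⟩ := pow_div_two_mul_pow_succ x hdvd
  subst hk2 hk1 hk2' hk1'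
  simp only [memF1, memF2, memF3, memF4, memF5, memF6, Nat.add_sub_cancel, hk1x, hk2'x, hk1'x]
  generalize x ^ _ = y at hy ⊢
  have H := traces_by_region hℓ (by omega) hprim' hq hy
  generalize Algebra.trace (ZMod 3) F (y ^ 2) = T₁ at H ⊢
  generalize Algebra.trace (ZMod 3) F y = T₂ at H ⊢
  have hL₁ : ℓ % 3 = 1 → (ℓ : ZMod 3) = 1 := fun h => by rw [← ZMod.natCast_mod, h, Nat.cast_one]
  have hL₂ : ℓ % 3 = 2 → (ℓ : ZMod 3) = -1 := fun h => by rw [← ZMod.natCast_mod, h]; rfl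
  have hneg : (-1 : ZMod 3) - 1 = 1 := by decide
  rcases H with ⟨rfl, h₁, h₂⟩ | ⟨hA, hB, hC, hD, h₁, h₂⟩ | ⟨hA, hB, hC, hD, h₁, h₂⟩ |
      ⟨hA, hB, hC, hD, h₁, h₂⟩ | ⟨hA, hB, hC, hD, h₁, h₂⟩ <;>
    refine ⟨fun hmod => ?_, fun hmod => ?_⟩ <;>
    -- each region decides all four conditions, leaving only the trace values to compare
    simp [*, pow_succ (-1 : ZMod 3) m]
end
end
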